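/- arXiv:2209.03989 — 8 statements merged into one kernel-verified Lean document; each statement's English description precedes it below -/
import Mathlib

section
/- Let $U$ be an open convex subset of a Banach space $X$ and $f:U\to\mathbb{R}$ be continuous and quasi-concave. Let $x'\in X'\setminus\{0\}$ be a continuous linear functional. If $f$ is Fréchet differentiable at $x^*\in U$ and $Df(x^*)=\lambda x'$ for some $\lambda>0$, then $f(x^*)\ge f(x)$ for every $x\in U$ with $x'(x)=x'(x^*)$. -/
open Set Filter Topology

/-!
If `f x > f x*`, perturb `x` to a nearby `y ∈ U` with `x' y < x' x*` and still `f y > f x*`.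
By quasi-concavity `x*` minimises `f` on the segment `[x*, y]`, so
`λ x' (y - x*) = Df(x*) (y - x*) ≥ 0`, contradicting `λ > 0`.
-/

theorem QuasiconcaveOn.fderiv_nonneg_of_le {X : Type*} [NormedAddCommGroup X] [NormedSpace ℝ X]
    {s : Set X} {f : X → ℝ} {f' : X →L[ℝ] ℝ} {a y : X} (hf : QuasiconcaveOn ℝ s f)
    (ha : a ∈ s) (hy : y ∈ s) (hay : f a ≤ f y) (hderiv : HasFDerivAt f f' a) :
    0 ≤ f' (y - a) := by
  have hsegment : segment ℝ a y ⊆ {x ∈ s | f a ≤ f x} :=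
    (hf (f a)).segment_subset ⟨ha, le_rfl⟩ ⟨hy, hay⟩
  have hmin : IsMinOn f (segment ℝ a y) a := fun x hx => (hsegment hx).2
  exact hmin.localize.hasFDerivWithinAt_nonneg hderiv.hasFDerivWithinAt
    (sub_mem_posTangentConeAt_of_segment_subset subset_rfl)

theorem ContinuousLinearMap.frequently_lt_apply {X : Type*} [NormedAddCommGroup X]
    [NormedSpace ℝ X] {φ : X →L[ℝ] ℝ} (hφ : φ ≠ 0) (x : X) :
    ∃ᶠ y in 𝓝 x, φ y < φ x := by
  obtain ⟨v, hv⟩ : ∃ v, φ v ≠ 0 := by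
    by_contra! h
    exact hφ (ContinuousLinearMap.ext h)
  set w : X := (φ v)⁻¹ • v
  have hw : φ w = 1 := by simp [w, hv]
  have hline : Tendsto (fun t : ℝ => x - t • w) (𝓝[>] 0) (𝓝 x) := by
    have : Continuous fun t : ℝ => x - t • w := by fun_prop
    simpa using (this.tendsto 0).mono_left (nhdsWithin_le_nhds (s := Ioi 0))
  refine hline.frequently (Eventually.frequently ?_)
  filter_upwards [self_mem_nhdsWithin] with t (ht : 0 < t)
  simpa [hw] using ht

theorem stmt_0_general {X : Type*} [NormedAddCommGroup X] [NormedSpace ℝ X]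
    (U : Set X) (hU : IsOpen U) (hUc : Convex ℝ U)
    (f : X → ℝ) (hf : ContinuousOn f U)
    (hqc : ∀ x ∈ U, ∀ y ∈ U, ∀ t ∈ Icc (0:ℝ) 1,
      min (f x) (f y) ≤ f ((1 - t) • x + t • y))
    (x' : X →L[ℝ] ℝ) (hx' : x' ≠ 0)
    (xstar : X) (hxstar : xstar ∈ U)
    (lam : ℝ) (hlam : 0 < lam)
    (hdiff : HasFDerivAt f (lam • x') xstar) :
    ∀ x ∈ U, x' x = x' xstar → f x ≤ f xstar := by
  have hquasi : QuasiconcaveOn ℝ U f := by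
    refine quasiconcaveOn_iff_min_le.2 ⟨hUc, fun x hx y hy a b ha hb hab => ?_⟩
    obtain rfl : a = 1 - b := by linarith
    exact hqc x hx y hy b ⟨hb, by linarith⟩
  intro x hx hlevel
  by_contra! hlt
  have habove : ∀ᶠ y in 𝓝 x, y ∈ U ∧ f xstar < f y :=
    (hU.eventually_mem hx).and ((hf.continuousAt (hU.mem_nhds hx)).eventually (Ioi_mem_nhds hlt))
  obtain ⟨y, ⟨hyU, hfy⟩, hbelow⟩ := (habove.and_frequently (x'.frequently_lt_apply hx' x)).exists
  have hnonneg := hquasi.fderiv_nonneg_of_le hxstar hyU hfy.le hdiff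
  simp only [FunLike.coe_smul, Pi.smul_apply, map_sub, smul_eq_mul] at hnonneg
  nlinarith

theorem stmt_0 {X : Type*} [NormedAddCommGroup X] [NormedSpace ℝ X] [CompleteSpace X]
    (U : Set X) (hU : IsOpen U) (hUc : Convex ℝ U)
    (f : X → ℝ) (hf : ContinuousOn f U)
    (hqc : ∀ x ∈ U, ∀ y ∈ U, ∀ t ∈ Icc (0:ℝ) 1,
      min (f x) (f y) ≤ f ((1 - t) • x + t • y))
    (x' : X →L[ℝ] ℝ) (hx' : x' ≠ 0)
    (xstar : X) (hxstar : xstar ∈ U)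
    (lam : ℝ) (hlam : 0 < lam)
    (hdiff : HasFDerivAt f (lam • x') xstar) :
    ∀ x ∈ U, x' x = x' xstar → f x ≤ f xstar :=
  stmt_0_general U hU hUc f hf hqc x' hx' xstar hxstar lam hlam hdiff
end

section
/- Let $U$ be an open convex subset of a Banach space $X$, $f:U\to\mathbb{R}$ be $C^1$ with $Df(x)\ne 0$ on $U$, and suppose there exist a $C^1$ map $g:U\to X'$ and a positive continuous function $\lambda:U\to\mathbb{R}$ with $Df(x)=\lambda(x)g(x)$ for all $x\in U$. If $f$ is quasi-concave, then for every $x\in U$ and $w\in X$ with $\langle w,g(x)\rangle=0$, one has $\langle w, Dg(x)w\rangle\le 0$. -/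
open Set Filter Topology SignType

/-!
If `⟨w, Dg(x) w⟩ > 0` for some `w` with `⟨w, g(x)⟩ = 0`, then along the line `t ↦ x + t w` the
function `h(t) = ⟨w, g(x + t w)⟩` vanishes at `0` with positive derivative, so it has the sign of
`t`. Since `λ > 0`, the derivative `λ(x + t w) h(t)` of `t ↦ f(x + t w)` also has the sign of `t`,
so `f` has a strict local minimum at `x` along the line. Then `f(x ± t w) > f(x)` for small `t`,
which contradicts quasi-concavity at the midpoint `x` of `x - t w` and `x + t w`.
-/

theorem HasFDerivAt.hasDerivAt_comp_add_smul {𝕜 E F : Type*} [NontriviallyNormedField 𝕜]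
    [NormedAddCommGroup E] [NormedSpace 𝕜 E] [NormedAddCommGroup F] [NormedSpace 𝕜 F]
    {f : E → F} {f' : E →L[𝕜] F} {x w : E} {t : 𝕜} (hf : HasFDerivAt f f' (x + t • w)) :
    HasDerivAt (fun s : 𝕜 ↦ f (x + s • w)) (f' w) t := by
  simpa [Function.comp_def] using
    hf.comp_hasDerivAt t (((hasDerivAt_id t).smul_const w).const_add x)

theorem eventually_nhdsNE_lt_of_sign_hasDerivAt {φ φ' : ℝ → ℝ} {x₀ : ℝ}
    (hφ : ∀ᶠ x in 𝓝 x₀, HasDerivAt φ (φ' x) x)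
    (hsign : ∀ᶠ x in 𝓝 x₀, sign (φ' x) = sign (x - x₀)) :
    ∀ᶠ x in 𝓝[≠] x₀, φ x₀ < φ x := by
  obtain ⟨ε, hε, hball⟩ := Metric.eventually_nhds_iff.1 (hφ.and hsign)
  have hball' : ∀ x ∈ Ioo (x₀ - ε) (x₀ + ε), HasDerivAt φ (φ' x) x ∧
      sign (φ' x) = sign (x - x₀) := fun x ⟨h₁, h₂⟩ ↦
    hball (by rw [Real.dist_eq, abs_lt]; constructor <;> linarith)
  have hright : StrictMonoOn φ (Ico x₀ (x₀ + ε)) := by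
    refine strictMonoOn_of_hasDerivWithinAt_pos (convex_Ico _ _)
      (fun x hx ↦ (hball' x ⟨by linarith [hx.1], hx.2⟩).1.continuousAt.continuousWithinAt)
      (fun x hx ↦ (hball' x ?_).1.hasDerivWithinAt) fun x hx ↦ ?_
    all_goals rw [interior_Ico] at hx
    · exact ⟨by linarith [hx.1], hx.2⟩
    · rw [← sign_eq_one_iff, (hball' x ⟨by linarith [hx.1], hx.2⟩).2, sign_eq_one_iff]
      linarith [hx.1]
  have hleft : StrictAntiOn φ (Ioc (x₀ - ε) x₀) := by
    refine strictAntiOn_of_hasDerivWithinAt_neg (convex_Ioc _ _)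
      (fun x hx ↦ (hball' x ⟨hx.1, by linarith [hx.2]⟩).1.continuousAt.continuousWithinAt)
      (fun x hx ↦ (hball' x ?_).1.hasDerivWithinAt) fun x hx ↦ ?_
    all_goals rw [interior_Ioc] at hx
    · exact ⟨hx.1, by linarith [hx.2]⟩
    · rw [← sign_eq_neg_one_iff, (hball' x ⟨hx.1, by linarith [hx.2]⟩).2, sign_eq_neg_one_iff]
      linarith [hx.2]
  filter_upwards [inter_mem_nhdsWithin _
    (Ioo_mem_nhds (sub_lt_self x₀ hε) (lt_add_of_pos_right x₀ hε))] with x ⟨hne, hx⟩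
  rcases lt_or_gt_of_ne hne with hlt | hgt
  · exact hleft ⟨hx.1, hlt.le⟩ ⟨by linarith [hx.1], le_rfl⟩ hlt
  · exact hright ⟨le_rfl, by linarith [hx.2]⟩ ⟨hgt.le, hx.2⟩ hgt

theorem not_eventually_lt_add_smul_of_min_le {X : Type*} [AddCommGroup X] [Module ℝ X]
    {U : Set X} {f : X → ℝ}
    (hqc : ∀ x ∈ U, ∀ y ∈ U, ∀ t ∈ Icc (0:ℝ) 1, min (f x) (f y) ≤ f ((1 - t) • x + t • y))
    (x w : X) : ¬ ∀ᶠ t in 𝓝[≠] (0 : ℝ), x + t • w ∈ U ∧ f x < f (x + t • w) := by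
  intro h
  obtain ⟨ε, hε, hball⟩ := Metric.eventually_nhds_iff.1 (eventually_nhdsWithin_iff.1 h)
  have hend : ∀ s : ℝ, |s| = ε / 2 → x + s • w ∈ U ∧ f x < f (x + s • w) := fun s hs ↦
    hball (by rw [Real.dist_eq, sub_zero, hs]; linarith) fun h0 ↦ by
      rw [h0, abs_zero] at hs; linarith
  obtain ⟨hU₁, hlt₁⟩ := hend (-(ε / 2)) (by rw [abs_neg, abs_of_pos (half_pos hε)])
  obtain ⟨hU₂, hlt₂⟩ := hend (ε / 2) (abs_of_pos (half_pos hε))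
  have hmid := hqc _ hU₁ _ hU₂ (1 / 2) ⟨by norm_num, by norm_num⟩
  rw [show (1 - 1 / 2 : ℝ) • (x + -(ε / 2) • w) + (1 / 2 : ℝ) • (x + (ε / 2) • w) = x by module]
    at hmid
  exact (lt_min hlt₁ hlt₂).not_ge hmid

theorem stmt_1_general {X : Type*} [NormedAddCommGroup X] [NormedSpace ℝ X]
    (U : Set X) (hU : IsOpen U)
    (f : X → ℝ) (hf : ContDiffOn ℝ 1 f U)
    (g : X → (X →L[ℝ] ℝ)) (hg : ContDiffOn ℝ 1 g U)
    (lam : X → ℝ) (hlampos : ∀ x ∈ U, 0 < lam x)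
    (heq : ∀ x ∈ U, fderiv ℝ f x = lam x • g x)
    (hqc : ∀ x ∈ U, ∀ y ∈ U, ∀ t ∈ Icc (0:ℝ) 1,
      min (f x) (f y) ≤ f ((1 - t) • x + t • y)) :
    ∀ x ∈ U, ∀ w : X, g x w = 0 → fderiv ℝ g x w w ≤ 0 := by
  intro x hx w hw
  by_contra! hpos
  have hline : ∀ᶠ t in 𝓝 (0 : ℝ), x + t • w ∈ U :=
    (Continuous.tendsto (by fun_prop) 0).eventually (by simpa using hU.mem_nhds hx)
  have hgw : HasDerivAt (fun t : ℝ ↦ g (x + t • w) w) (fderiv ℝ g x w w) 0 := by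
    have hgx : HasFDerivAt g (fderiv ℝ g x) (x + (0 : ℝ) • w) := by
      rw [zero_smul, add_zero]
      exact ((hg.differentiableOn one_ne_zero).differentiableAt (hU.mem_nhds hx)).hasFDerivAt
    simpa using hgx.hasDerivAt_comp_add_smul.clm_apply (hasDerivAt_const 0 w)
  have hsign_g : ∀ᶠ t in 𝓝 (0 : ℝ), sign (g (x + t • w) w) = sign (t - 0) :=
    eventually_nhdsWithin_sign_eq_of_deriv_pos (hgw.deriv ▸ hpos) (by simpa using hw)
  have hφ : ∀ᶠ t in 𝓝 (0 : ℝ), HasDerivAt (fun s : ℝ ↦ f (x + s • w))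
      (lam (x + t • w) * g (x + t • w) w) t := by
    filter_upwards [hline] with t ht
    have hft := ((hf.differentiableOn one_ne_zero).differentiableAt (hU.mem_nhds ht)).hasFDerivAt
    simpa [heq _ ht] using hft.hasDerivAt_comp_add_smul
  have hsign_φ : ∀ᶠ t in 𝓝 (0 : ℝ), sign (lam (x + t • w) * g (x + t • w) w) = sign (t - 0) := by
    filter_upwards [hline, hsign_g] with t ht hsign
    rw [sign_mul, sign_pos (hlampos _ ht), one_mul, hsign]
  refine not_eventually_lt_add_smul_of_min_le hqc x w ?_
  filter_upwards [eventually_nhdsNE_lt_of_sign_hasDerivAt hφ hsign_φ,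
    nhdsWithin_le_nhds hline] with t hlt ht
  exact ⟨ht, by simpa using hlt⟩

theorem stmt_1 {X : Type*} [NormedAddCommGroup X] [NormedSpace ℝ X] [CompleteSpace X]
    (U : Set X) (hU : IsOpen U) (hUc : Convex ℝ U)
    (f : X → ℝ) (hf : ContDiffOn ℝ 1 f U)
    (hDf : ∀ x ∈ U, fderiv ℝ f x ≠ 0)
    (g : X → (X →L[ℝ] ℝ)) (hg : ContDiffOn ℝ 1 g U)
    (lam : X → ℝ) (hlamc : ContinuousOn lam U) (hlampos : ∀ x ∈ U, 0 < lam x)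
    (heq : ∀ x ∈ U, fderiv ℝ f x = lam x • g x)
    (hqc : ∀ x ∈ U, ∀ y ∈ U, ∀ t ∈ Icc (0:ℝ) 1,
      min (f x) (f y) ≤ f ((1 - t) • x + t • y)) :
    ∀ x ∈ U, ∀ w : X, g x w = 0 → fderiv ℝ g x w w ≤ 0 :=
  stmt_1_general U hU f hf g hg lam hlampos heq hqc
end

section
/- Let $U$ be an open convex subset of a Banach space $X$, $f:U\to\mathbb{R}$ be $C^1$ with $Df(x)\ne 0$ on $U$, and suppose there exist a $C^1$ map $g:U\to X'$ and a positive continuous function $\lambda:U\to\mathbb{R}$ with $Df(x)=\lambda(x)g(x)$. If $\langle w, Dg(x)w\rangle\le 0$ for every $x\in U$ and every $w\in X$ with $\langle w,g(x)\rangle=0$, then $f$ is quasi-concave. -/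
open Set Filter Topology

/-!
Restrict `f` to a segment: if it dipped strictly below both endpoint values, take the largest
point `T` at which `f` attains its minimum on the segment. There the direction `w` of the segment
lies in `ker g`. Through that point `x₀` run the curve `γ t = x₀ + t • w + ρ t • u` inside the
level set of `f`, where `g x₀ u > 0` and `ρ` solves the ODE that keeps the velocity in `ker g`.
Differentiating `g (γ t) (γ' t) = 0` once more and using the sign condition on `Dg` shows
`ρ'' ≥ 0`; since `ρ' 0 = 0` (as `g x₀ w = 0`), `ρ` has a minimum `0` at `0`. As `f` increases
in the direction `u`, `f (x₀ + t • w) ≤ f (γ t) = f x₀` for small `t`, so points just beyond `T`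
are minimisers too, which contradicts the choice of `T`.
-/

theorem ContDiffAt.exists_eq_forall_mem_Ioo_hasDerivAt_of_prod {E : Type*}
    [NormedAddCommGroup E] [NormedSpace ℝ E] [CompleteSpace E] {F : ℝ × E → E} {t₀ : ℝ}
    {x₀ : E} (hF : ContDiffAt ℝ 1 F (t₀, x₀)) :
    ∃ α : ℝ → E, α t₀ = x₀ ∧ ∃ ε > (0 : ℝ),
      ∀ t ∈ Ioo (t₀ - ε) (t₀ + ε), HasDerivAt α (F (t, α t)) t := by
  obtain ⟨β, hβ₀, ε, hε, hβ⟩ :=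
    (contDiffAt_const.prodMk hF : ContDiffAt ℝ 1 (fun p ↦ ((1 : ℝ), F p)) (t₀, x₀))
      |>.exists_forall_mem_closedBall_exists_eq_forall_mem_Ioo_hasDerivAt₀ t₀
  have hfst : ∀ t ∈ Ioo (t₀ - ε) (t₀ + ε), HasDerivAt (fun s ↦ (β s).1) 1 t := fun t ht ↦ by
    simpa [Function.comp_def] using
      (ContinuousLinearMap.fst ℝ ℝ E).hasFDerivAt.comp_hasDerivAt t (hβ t ht)
  have htime : EqOn (fun s ↦ (β s).1) id (Ioo (t₀ - ε) (t₀ + ε)) :=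
    isOpen_Ioo.eqOn_of_deriv_eq isPreconnected_Ioo
      (fun t ht ↦ (hfst t ht).differentiableAt.differentiableWithinAt)
      differentiableOn_id (fun t ht ↦ by simp [(hfst t ht).deriv])
      (x := t₀) ⟨by linarith, by linarith⟩ (by simp [hβ₀])
  refine ⟨fun s ↦ (β s).2, by simp [hβ₀], ε, hε, fun t ht ↦ ?_⟩
  have hβt : β t = (t, (β t).2) := Prod.ext (htime ht) rfl
  simpa [Function.comp_def, ← hβt] using
    (ContinuousLinearMap.snd ℝ ℝ E).hasFDerivAt.comp_hasDerivAt t (hβ t ht)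

theorem ContinuousLinearMap.exists_apply_pos {X : Type*} [NormedAddCommGroup X]
    [NormedSpace ℝ X] {ℓ : X →L[ℝ] ℝ} (hℓ : ℓ ≠ 0) : ∃ u, 0 < ℓ u := by
  obtain ⟨v, hv⟩ := DFunLike.ne_iff.1 hℓ
  rcases (show ℓ v ≠ 0 from hv).lt_or_gt with h | h
  · exact ⟨-v, by simpa using h⟩
  · exact ⟨v, h⟩

theorem min_le_of_isMinOn_imp_isLocalMax {φ : ℝ → ℝ} {a b : ℝ} (hφ : ContinuousOn φ (Icc a b))
    (h : ∀ T ∈ Ioo a b, IsMinOn φ (Icc a b) T → IsLocalMax φ T) :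
    ∀ t ∈ Icc a b, min (φ a) (φ b) ≤ φ t := by
  intro t₀ ht₀
  by_contra! hlt
  obtain ⟨m, hm, hmin⟩ := isCompact_Icc.exists_isMinOn ⟨t₀, ht₀⟩ hφ
  set M := Icc a b ∩ φ ⁻¹' Iic (φ m)
  have hMc : IsCompact M :=
    isCompact_Icc.of_isClosed_subset
      (hφ.preimage_isClosed_of_isClosed isClosed_Icc isClosed_Iic) inter_subset_left
  obtain ⟨hT, hTm⟩ : sSup M ∈ M := hMc.sSup_mem ⟨m, hm, le_refl (φ m)⟩
  set T := sSup M
  have hTmin : IsMinOn φ (Icc a b) T :=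
    isMinOn_iff.2 fun s hs ↦ hTm.trans (isMinOn_iff.1 hmin s hs)
  have hφT : φ T < min (φ a) (φ b) := (hTmin ht₀).trans_lt hlt
  have hTab : T ∈ Ioo a b := by
    refine ⟨hT.1.lt_of_ne fun h ↦ ?_, hT.2.lt_of_ne fun h ↦ ?_⟩ <;> simp [← h] at hφT
  obtain ⟨s, ⟨hsφ, hs⟩, hsT⟩ : ∃ s, (φ s ≤ φ T ∧ s ∈ Icc a b) ∧ s ∈ Ioi T :=
    ((((h T hTab hTmin).and (Icc_mem_nhds hTab.1 hTab.2)).filter_mono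
      (nhdsWithin_le_nhds (s := Ioi T))).and self_mem_nhdsWithin).exists
  exact hsT.not_ge (le_csSup hMc.bddAbove ⟨hs, hsφ.trans hTm⟩)

section

variable {X : Type*} [NormedAddCommGroup X] [NormedSpace ℝ X] {U : Set X} {f : X → ℝ}
  {g : X → X →L[ℝ] ℝ} {lam : X → ℝ}

theorem hasDerivAt_comp_of_fderiv_eq_smul (hU : IsOpen U) (hf : ContDiffOn ℝ 1 f U)
    (heq : ∀ x ∈ U, fderiv ℝ f x = lam x • g x) {γ : ℝ → X} {v : X} {t : ℝ}
    (hγ : HasDerivAt γ v t) (ht : γ t ∈ U) :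
    HasDerivAt (fun s ↦ f (γ s)) (lam (γ t) * g (γ t) v) t := by
  have hdf : HasFDerivAt f (fderiv ℝ f (γ t)) (γ t) :=
    ((hf.contDiffAt (hU.mem_nhds ht)).differentiableAt one_ne_zero).hasFDerivAt
  simpa [Function.comp_def, heq _ ht] using hdf.comp_hasDerivAt t hγ

theorem le_apply_add_of_convex (hU : IsOpen U) (hf : ContDiffOn ℝ 1 f U)
    (hlampos : ∀ x ∈ U, 0 < lam x) (heq : ∀ x ∈ U, fderiv ℝ f x = lam x • g x)
    {S : Set X} (hS : Convex ℝ S) (hSU : S ⊆ U) {p v : X} (hp : p ∈ S) (hpv : p + v ∈ S)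
    (hv : ∀ z ∈ S, 0 ≤ g z v) : f p ≤ f (p + v) := by
  have hmem : ∀ s ∈ Icc (0 : ℝ) 1, p + s • v ∈ S := fun s hs ↦ hS.add_smul_mem hp hpv hs
  have hd : ∀ s ∈ Icc (0 : ℝ) 1,
      HasDerivAt (fun s ↦ f (p + s • v)) (lam (p + s • v) * g (p + s • v) v) s :=
    fun s hs ↦ hasDerivAt_comp_of_fderiv_eq_smul hU hf heq
      (by simpa using ((hasDerivAt_id s).smul_const v).const_add p) (hSU (hmem s hs))
  have hmono : MonotoneOn (fun s : ℝ ↦ f (p + s • v)) (Icc 0 1) :=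
    monotoneOn_of_hasDerivWithinAt_nonneg (convex_Icc 0 1)
      (fun s hs ↦ (hd s hs).continuousAt.continuousWithinAt)
      (fun s hs ↦ (hd s (interior_subset hs)).hasDerivWithinAt)
      (fun s hs ↦ mul_nonneg (hlampos _ (hSU (hmem s (interior_subset hs)))).le
        (hv _ (hmem s (interior_subset hs))))
  simpa using hmono (left_mem_Icc.2 zero_le_one) (right_mem_Icc.2 zero_le_one) zero_le_one

theorem apply_nonneg_of_eventually_apply_eq_zero {γ γ' : ℝ → X} {γ'' : X} {t : ℝ}
    (hg : DifferentiableAt ℝ g (γ t)) (hγ : HasDerivAt γ (γ' t) t) (hγ' : HasDerivAt γ' γ'' t)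
    (hψ : ∀ᶠ s in 𝓝 t, g (γ s) (γ' s) = 0) (hsec : fderiv ℝ g (γ t) (γ' t) (γ' t) ≤ 0) :
    0 ≤ g (γ t) γ'' := by
  have hψ' : HasDerivAt (fun s ↦ g (γ s) (γ' s))
      (fderiv ℝ g (γ t) (γ' t) (γ' t) + g (γ t) γ'') t :=
    (hg.hasFDerivAt.comp_hasDerivAt t hγ).clm_apply hγ'
  have := hψ'.unique ((hasDerivAt_const t 0).congr_of_eventuallyEq hψ)
  linarith

/-- If `ρ' t = levelSlope g x₀ w u (t, ρ t)`, the velocity `w + ρ' t • u` of the curve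
`t ↦ x₀ + t • w + ρ t • u` lies in the kernel of `g`, so the curve stays in a level set of `f`. -/
noncomputable def levelSlope (g : X → X →L[ℝ] ℝ) (x₀ w u : X) (p : ℝ × ℝ) : ℝ :=
  -(g (x₀ + p.1 • w + p.2 • u) w / g (x₀ + p.1 • w + p.2 • u) u)

theorem contDiffAt_levelSlope (hU : IsOpen U) (hg : ContDiffOn ℝ 1 g U) {x₀ w u : X}
    {p : ℝ × ℝ} (hp : x₀ + p.1 • w + p.2 • u ∈ U) (hpu : g (x₀ + p.1 • w + p.2 • u) u ≠ 0) :
    ContDiffAt ℝ 1 (levelSlope g x₀ w u) p := by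
  have hplane : ContDiff ℝ 1 (fun q : ℝ × ℝ ↦ x₀ + q.1 • w + q.2 • u) := by fun_prop
  have hgp := (hg.contDiffAt (hU.mem_nhds hp)).comp p hplane.contDiffAt
  exact ((hgp.clm_apply contDiffAt_const).div (hgp.clm_apply contDiffAt_const) hpu).neg

theorem apply_add_levelSlope_smul_eq_zero {x₀ w u : X} {p : ℝ × ℝ}
    (hpu : g (x₀ + p.1 • w + p.2 • u) u ≠ 0) :
    g (x₀ + p.1 • w + p.2 • u) (w + levelSlope g x₀ w u p • u) = 0 := by
  rw [levelSlope, map_add, map_smul, smul_eq_mul]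
  field_simp
  ring

theorem hasDerivAt_levelCurve {x₀ w u : X} {ρ : ℝ → ℝ} {t : ℝ}
    (hρ : HasDerivAt ρ (levelSlope g x₀ w u (t, ρ t)) t) :
    HasDerivAt (fun s ↦ x₀ + s • w + ρ s • u) (w + levelSlope g x₀ w u (t, ρ t) • u) t :=
  ((((hasDerivAt_id t).smul_const w).const_add x₀).add (hρ.smul_const u)).congr_deriv
    (by rw [one_smul])

theorem apply_levelCurve_eq (hU : IsOpen U) (hf : ContDiffOn ℝ 1 f U)
    (heq : ∀ x ∈ U, fderiv ℝ f x = lam x • g x) {x₀ w u : X} {ρ : ℝ → ℝ} {D : Set ℝ}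
    (hDo : IsOpen D) (hDc : IsPreconnected D) (hmem : ∀ t ∈ D, x₀ + t • w + ρ t • u ∈ U)
    (hu : ∀ t ∈ D, g (x₀ + t • w + ρ t • u) u ≠ 0)
    (hρ : ∀ t ∈ D, HasDerivAt ρ (levelSlope g x₀ w u (t, ρ t)) t) {s t : ℝ} (hs : s ∈ D)
    (ht : t ∈ D) : f (x₀ + s • w + ρ s • u) = f (x₀ + t • w + ρ t • u) := by
  have hd : ∀ t ∈ D, HasDerivAt (fun s ↦ f (x₀ + s • w + ρ s • u)) 0 t := fun t ht ↦ by
    simpa [apply_add_levelSlope_smul_eq_zero (p := (t, ρ t)) (hu t ht)] using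
      hasDerivAt_comp_of_fderiv_eq_smul hU hf heq (hasDerivAt_levelCurve (hρ t ht)) (hmem t ht)
  exact hDo.is_const_of_deriv_eq_zero hDc
    (fun s hs ↦ (hd s hs).differentiableAt.differentiableWithinAt) (fun s hs ↦ (hd s hs).deriv)
    hs ht

theorem convexOn_of_hasDerivAt_levelSlope (hU : IsOpen U) (hg : ContDiffOn ℝ 1 g U)
    (hsec : ∀ x ∈ U, ∀ w : X, g x w = 0 → fderiv ℝ g x w w ≤ 0) {x₀ w u : X} {ρ : ℝ → ℝ}
    {D : Set ℝ} (hDo : IsOpen D) (hDc : Convex ℝ D) (hmem : ∀ t ∈ D, x₀ + t • w + ρ t • u ∈ U)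
    (hu : ∀ t ∈ D, 0 < g (x₀ + t • w + ρ t • u) u)
    (hρ : ∀ t ∈ D, HasDerivAt ρ (levelSlope g x₀ w u (t, ρ t)) t) : ConvexOn ℝ D ρ := by
  set σ : ℝ → ℝ := fun t ↦ levelSlope g x₀ w u (t, ρ t)
  have hσ : ∀ t ∈ D, HasDerivAt σ (deriv σ t) t ∧ 0 ≤ deriv σ t := by
    intro t ht
    have hslope := (contDiffAt_levelSlope hU hg (p := (t, ρ t)) (hmem t ht)
      (hu t ht).ne').differentiableAt one_ne_zero
    have hcomp := hslope.hasFDerivAt.comp_hasDerivAt t ((hasDerivAt_id' t).prodMk (hρ t ht))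
    have hσd : HasDerivAt σ (deriv σ t) t := hcomp.differentiableAt.hasDerivAt
    have hker : ∀ᶠ s in 𝓝 t, g (x₀ + s • w + ρ s • u) (w + σ s • u) = 0 := by
      filter_upwards [hDo.mem_nhds ht] with s hs
      exact apply_add_levelSlope_smul_eq_zero (p := (s, ρ s)) (hu s hs).ne'
    have := apply_nonneg_of_eventually_apply_eq_zero (γ := fun s ↦ x₀ + s • w + ρ s • u)
      ((hg.contDiffAt (hU.mem_nhds (hmem t ht))).differentiableAt one_ne_zero)
      (hasDerivAt_levelCurve (hρ t ht)) (by simpa using (hσd.smul_const u).const_add w) hker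
      (hsec _ (hmem t ht) _ hker.self_of_nhds)
    rw [map_smul, smul_eq_mul] at this
    exact ⟨hσd, nonneg_of_mul_nonneg_left this (hu t ht)⟩
  refine convexOn_of_hasDerivWithinAt2_nonneg hDc
    (fun t ht ↦ (hρ t ht).continuousAt.continuousWithinAt) (f' := σ) (f'' := deriv σ) ?_ ?_ ?_
  all_goals rw [hDo.interior_eq]
  · exact fun t ht ↦ (hρ t ht).hasDerivWithinAt
  · exact fun t ht ↦ (hσ t ht).1.hasDerivWithinAt
  · exact fun t ht ↦ (hσ t ht).2

theorem exists_levelCurve (hU : IsOpen U) (hg : ContDiffOn ℝ 1 g U) {x₀ u : X} (hx₀ : x₀ ∈ U)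
    (hu : 0 < g x₀ u) (w : X) :
    ∃ S : Set X, Convex ℝ S ∧ S ⊆ U ∧ (∀ z ∈ S, 0 < g z u) ∧ ∃ ρ : ℝ → ℝ, ρ 0 = 0 ∧
      ∀ᶠ t in 𝓝 0, x₀ + t • w ∈ S ∧ x₀ + t • w + ρ t • u ∈ S ∧
        HasDerivAt ρ (levelSlope g x₀ w u (t, ρ t)) t := by
  have hopen : IsOpen (U ∩ (fun z ↦ g z u) ⁻¹' Ioi 0) :=
    (hg.continuousOn.clm_apply continuousOn_const).isOpen_inter_preimage hU isOpen_Ioi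
  obtain ⟨r, hr, hball⟩ := Metric.isOpen_iff.1 hopen x₀ ⟨hx₀, hu⟩
  obtain ⟨ρ, hρ₀, ε, hε, hρ⟩ := (contDiffAt_levelSlope hU hg (p := (0, 0)) (w := w)
    (by simpa using hx₀) (by simpa using hu.ne')).exists_eq_forall_mem_Ioo_hasDerivAt_of_prod
  have hode : ∀ᶠ t in 𝓝 (0 : ℝ), t ∈ Ioo (0 - ε) (0 + ε) :=
    Ioo_mem_nhds (by linarith) (by linarith)
  have hline : Tendsto (fun t : ℝ ↦ x₀ + t • w) (𝓝 0) (𝓝 x₀) := by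
    have hc : Continuous (fun t : ℝ ↦ x₀ + t • w) := by fun_prop
    simpa using hc.tendsto 0
  have hcurve : Tendsto (fun t ↦ x₀ + t • w + ρ t • u) (𝓝 0) (𝓝 x₀) := by
    have hρc : ContinuousAt (fun t ↦ ρ t • u) 0 :=
      (hρ 0 (by simpa using hε)).continuousAt.smul continuousAt_const
    simpa [hρ₀] using hline.add hρc.tendsto
  refine ⟨Metric.ball x₀ r, convex_ball x₀ r, fun z hz ↦ (hball hz).1, fun z hz ↦ (hball hz).2,
    ρ, hρ₀, ?_⟩
  filter_upwards [hline (Metric.ball_mem_nhds x₀ hr), hcurve (Metric.ball_mem_nhds x₀ hr), hode]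
    with t hlt hct ht
  exact ⟨hlt, hct, hρ t ht⟩

theorem isLocalMax_of_apply_eq_zero (hU : IsOpen U) (hf : ContDiffOn ℝ 1 f U)
    (hg : ContDiffOn ℝ 1 g U) (hlampos : ∀ x ∈ U, 0 < lam x)
    (heq : ∀ x ∈ U, fderiv ℝ f x = lam x • g x)
    (hsec : ∀ x ∈ U, ∀ w : X, g x w = 0 → fderiv ℝ g x w w ≤ 0)
    {x₀ u w : X} (hx₀ : x₀ ∈ U) (hu : 0 < g x₀ u) (hw : g x₀ w = 0) :
    IsLocalMax (fun t : ℝ ↦ f (x₀ + t • w)) 0 := by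
  obtain ⟨S, hSc, hSU, hSu, ρ, hρ₀, hρ⟩ := exists_levelCurve hU hg hx₀ hu w
  obtain ⟨δ, hδ, hD⟩ := Metric.eventually_nhds_iff_ball.1 hρ
  have h0 : (0 : ℝ) ∈ Metric.ball 0 δ := Metric.mem_ball_self hδ
  have hmem : ∀ t ∈ Metric.ball (0 : ℝ) δ, x₀ + t • w + ρ t • u ∈ U := fun t ht ↦
    hSU (hD t ht).2.1
  have hpos : ∀ t ∈ Metric.ball (0 : ℝ) δ, 0 < g (x₀ + t • w + ρ t • u) u := fun t ht ↦
    hSu _ (hD t ht).2.1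
  have hρ' : ∀ t ∈ Metric.ball (0 : ℝ) δ, HasDerivAt ρ (levelSlope g x₀ w u (t, ρ t)) t :=
    fun t ht ↦ (hD t ht).2.2
  have hρmin : IsMinOn ρ (Metric.ball 0 δ) 0 := by
    refine (convexOn_of_hasDerivAt_levelSlope hU hg hsec Metric.isOpen_ball (convex_ball 0 δ)
      hmem hpos hρ').isMinOn_of_rightDeriv_eq_zero (by rwa [Metric.isOpen_ball.interior_eq]) ?_
    rw [(hρ' 0 h0).hasDerivWithinAt.derivWithin (uniqueDiffWithinAt_Ioi 0)]
    simp [levelSlope, hρ₀, hw]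
  filter_upwards [Metric.isOpen_ball.mem_nhds h0] with t ht
  calc f (x₀ + t • w) ≤ f (x₀ + t • w + ρ t • u) :=
        le_apply_add_of_convex hU hf hlampos heq hSc hSU (hD t ht).1 (hD t ht).2.1
          fun z hz ↦ by
            rw [map_smul, smul_eq_mul]
            exact mul_nonneg (by simpa [hρ₀] using hρmin ht) (hSu z hz).le
    _ = f (x₀ + (0 : ℝ) • w + ρ 0 • u) :=
        apply_levelCurve_eq hU hf heq Metric.isOpen_ball (convex_ball 0 δ).isPreconnected hmem
          (fun t ht ↦ (hpos t ht).ne') hρ' ht h0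
    _ = f (x₀ + (0 : ℝ) • w) := by simp [hρ₀]

end

theorem stmt_2_general {X : Type*} [NormedAddCommGroup X] [NormedSpace ℝ X]
    (U : Set X) (hU : IsOpen U) (hUc : Convex ℝ U)
    (f : X → ℝ) (hf : ContDiffOn ℝ 1 f U)
    (hDf : ∀ x ∈ U, fderiv ℝ f x ≠ 0)
    (g : X → (X →L[ℝ] ℝ)) (hg : ContDiffOn ℝ 1 g U)
    (lam : X → ℝ) (hlampos : ∀ x ∈ U, 0 < lam x)
    (heq : ∀ x ∈ U, fderiv ℝ f x = lam x • g x)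
    (hsec : ∀ x ∈ U, ∀ w : X, g x w = 0 → fderiv ℝ g x w w ≤ 0) :
    ∀ x ∈ U, ∀ y ∈ U, ∀ t ∈ Icc (0:ℝ) 1,
      min (f x) (f y) ≤ f ((1 - t) • x + t • y) := by
  intro x hx y hy
  set c := AffineMap.lineMap (k := ℝ) x y
  have hcU : ∀ s ∈ Icc (0 : ℝ) 1, c s ∈ U := fun s hs ↦ hUc.lineMap_mem hx hy hs
  have hφ : ∀ s ∈ Icc (0 : ℝ) 1,
      HasDerivAt (fun s ↦ f (c s)) (lam (c s) * g (c s) (y - x)) s := fun s hs ↦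
    hasDerivAt_comp_of_fderiv_eq_smul hU hf heq AffineMap.hasDerivAt_lineMap (hcU s hs)
  have hquasi := min_le_of_isMinOn_imp_isLocalMax
    (fun s hs ↦ (hφ s hs).continuousAt.continuousWithinAt) fun T hT hmin ↦ by
      have hTU := hcU T (Ioo_subset_Icc_self hT)
      have hgw : g (c T) (y - x) = 0 := by
        have := (hmin.isLocalMin (Icc_mem_nhds hT.1 hT.2)).hasDerivAt_eq_zero
          (hφ T (Ioo_subset_Icc_self hT))
        exact (mul_eq_zero.1 this).resolve_left (hlampos _ hTU).ne'
      obtain ⟨u, hu⟩ := ContinuousLinearMap.exists_apply_pos (ℓ := g (c T)) fun h0 ↦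
        hDf _ hTU (by rw [heq _ hTU, h0, smul_zero])
      have hmax : IsLocalMax (fun s : ℝ ↦ f (c T + s • (y - x))) (T - T) := by
        rw [sub_self T]
        exact isLocalMax_of_apply_eq_zero hU hf hg hlampos heq hsec hTU hu hgw
      convert hmax.comp_continuous (g := fun s ↦ s - T)
        (continuousAt_id.sub continuousAt_const) using 2 with s
      show f (c s) = f (c T + (s - T) • (y - x))
      congr 1
      simp only [c, AffineMap.lineMap_apply_module']
      module
  intro t ht
  simpa [c, AffineMap.lineMap_apply_module] using hquasi t ht

theorem stmt_2 {X : Type*} [NormedAddCommGroup X] [NormedSpace ℝ X] [CompleteSpace X]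
    (U : Set X) (hU : IsOpen U) (hUc : Convex ℝ U)
    (f : X → ℝ) (hf : ContDiffOn ℝ 1 f U)
    (hDf : ∀ x ∈ U, fderiv ℝ f x ≠ 0)
    (g : X → (X →L[ℝ] ℝ)) (hg : ContDiffOn ℝ 1 g U)
    (lam : X → ℝ) (hlamc : ContinuousOn lam U) (hlampos : ∀ x ∈ U, 0 < lam x)
    (heq : ∀ x ∈ U, fderiv ℝ f x = lam x • g x)
    (hsec : ∀ x ∈ U, ∀ w : X, g x w = 0 → fderiv ℝ g x w w ≤ 0) :
    ∀ x ∈ U, ∀ y ∈ U, ∀ t ∈ Icc (0:ℝ) 1,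
      min (f x) (f y) ≤ f ((1 - t) • x + t • y) :=
  stmt_2_general U hU hUc f hf hDf g hg lam hlampos heq hsec
end

section
/- Let $U$ be an open convex subset of a Banach space $X$, $f:U\to\mathbb{R}$ be $C^1$, and suppose there exist a $C^1$ map $g:U\to X'$ and a positive continuous function $\lambda:U\to\mathbb{R}$ with $Df(x)=\lambda(x)g(x)$ for all $x\in U$. If $\langle w,Dg(x)w\rangle<0$ for every $x\in U$ and every $w\in X$ with $w\ne 0$ and $\langle w,g(x)\rangle=0$, then $f$ is strictly quasi-concave. -/
open Set

/-!
Restrict `f` to the segment: `φ s = f (x + s • (y - x))` has derivative `λ · ψ` with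
`ψ s = g (x + s • (y - x)) (y - x)` and `λ > 0`. At an interior local minimum of `φ` we get
`ψ = 0`, so the hypothesis on `Dg` gives `ψ' < 0` there; hence `ψ > 0` and `φ` is strictly
increasing just to the left of the minimum, which is absurd. A continuous function on `[0, 1]`
without interior local minima lies strictly above the smaller endpoint value inside the interval.
-/

open Filter Topology AffineMap

theorem eventually_lt_nhdsLT_of_hasDerivAt_neg {ψ : ℝ → ℝ} {d t : ℝ} (hψ : HasDerivAt ψ d t)
    (hd : d < 0) : ∀ᶠ s in 𝓝[<] t, ψ t < ψ s := by
  have hslope := (hasDerivAt_iff_tendsto_slope.mp hψ).mono_left (nhdsLT_le_nhdsNE t)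
  filter_upwards [hslope.eventually (eventually_lt_nhds hd), self_mem_nhdsWithin]
    with s hs (hst : s < t)
  have hsub := sub_smul_slope ψ t s
  rw [smul_eq_mul, vsub_eq_sub] at hsub
  nlinarith [mul_pos_of_neg_of_neg (sub_neg.2 hst) hs]

theorem eventually_lt_nhdsLT_of_hasDerivAt_pos {φ φ' : ℝ → ℝ} {t : ℝ}
    (hφ : ∀ᶠ s in 𝓝 t, HasDerivAt φ (φ' s) s) (hpos : ∀ᶠ s in 𝓝[<] t, 0 < φ' s) :
    ∀ᶠ s in 𝓝[<] t, φ s < φ t := by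
  obtain ⟨a, hat, ha⟩ := mem_nhdsLT_iff_exists_Ioo_subset.mp
    ((hφ.filter_mono nhdsWithin_le_nhds).and hpos)
  have hderiv : ∀ s ∈ Ioc a t, HasDerivAt φ (φ' s) s := fun s hs =>
    hs.2.eq_or_lt.elim (fun h => h ▸ hφ.self_of_nhds) fun h => (ha ⟨hs.1, h⟩).1
  have hmono : StrictMonoOn φ (Ioc a t) := by
    refine strictMonoOn_of_hasDerivWithinAt_pos (f' := φ') (convex_Ioc a t)
      (fun s hs => (hderiv s hs).continuousAt.continuousWithinAt) (fun s hs => ?_) fun s hs => ?_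
    all_goals rw [interior_Ioc] at hs
    exacts [(ha hs).1.hasDerivWithinAt, (ha hs).2]
  filter_upwards [Ioo_mem_nhdsLT hat] with s hs
  exact hmono (Ioo_subset_Ioc_self hs) (right_mem_Ioc.2 hat) hs.2

theorem not_isLocalMin_of_hasDerivAt_mul {φ ψ μ : ℝ → ℝ} {t : ℝ}
    (hφ : ∀ᶠ s in 𝓝 t, HasDerivAt φ (μ s * ψ s) s) (hμ : ∀ᶠ s in 𝓝 t, 0 < μ s)
    (hψ : ψ t = 0 → ∃ d < 0, HasDerivAt ψ d t) : ¬IsLocalMin φ t := by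
  intro hmin
  have hψt : ψ t = 0 :=
    (mul_eq_zero.1 (hmin.hasDerivAt_eq_zero hφ.self_of_nhds)).resolve_left hμ.self_of_nhds.ne'
  obtain ⟨d, hd, hψd⟩ := hψ hψt
  have hφ'pos : ∀ᶠ s in 𝓝[<] t, 0 < μ s * ψ s := by
    filter_upwards [hμ.filter_mono nhdsWithin_le_nhds, eventually_lt_nhdsLT_of_hasDerivAt_neg hψd hd]
      with s hμs hψs
    exact mul_pos hμs (hψt ▸ hψs)
  obtain ⟨s, hlt, hle⟩ := ((eventually_lt_nhdsLT_of_hasDerivAt_pos hφ hφ'pos).and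
    (hmin.filter_mono nhdsWithin_le_nhds)).exists
  exact hlt.not_ge hle

theorem min_lt_of_forall_not_isLocalMin {φ : ℝ → ℝ} {a b t : ℝ}
    (hφ : ContinuousOn φ (Icc a b)) (hloc : ∀ s ∈ Ioo a b, ¬IsLocalMin φ s) (ht : t ∈ Ioo a b) :
    min (φ a) (φ b) < φ t := by
  by_contra! hle
  obtain ⟨t₀, ht₀, hmin⟩ := isCompact_Icc.exists_isMinOn (nonempty_Icc.2 (ht.1.trans ht.2).le) hφ
  -- If the minimum is only attained at an endpoint, `t` attains it too.
  have hinterior : ∃ s ∈ Ioo a b, IsMinOn φ (Icc a b) s := by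
    by_cases h : t₀ ∈ Ioo a b
    · exact ⟨t₀, h, hmin⟩
    · have hend : t₀ = a ∨ t₀ = b := by
        by_contra! hne
        exact h ⟨ht₀.1.lt_of_ne hne.1.symm, ht₀.2.lt_of_ne hne.2⟩
      have hφt : φ t ≤ φ t₀ := by
        rcases hend with rfl | rfl
        exacts [hle.trans (min_le_left _ _), hle.trans (min_le_right _ _)]
      exact ⟨t, ht, fun s hs => hφt.trans (hmin hs)⟩
  obtain ⟨s, hs, hsmin⟩ := hinterior
  exact hloc s hs (hsmin.isLocalMin (Icc_mem_nhds hs.1 hs.2))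

theorem hasDerivAt_comp_lineMap {E F : Type*} [NormedAddCommGroup E] [NormedSpace ℝ E]
    [NormedAddCommGroup F] [NormedSpace ℝ F] {h : E → F} {x y : E} {s : ℝ}
    (hh : DifferentiableAt ℝ h (lineMap x y s)) :
    HasDerivAt (fun s => h (lineMap x y s)) (fderiv ℝ h (lineMap x y s) (y - x)) s :=
  hh.hasFDerivAt.comp_hasDerivAt s hasDerivAt_lineMap

theorem stmt_3_general {X : Type*} [NormedAddCommGroup X] [NormedSpace ℝ X]
    (U : Set X) (hU : IsOpen U) (hUc : Convex ℝ U)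
    (f : X → ℝ) (hf : ContDiffOn ℝ 1 f U)
    (g : X → (X →L[ℝ] ℝ)) (hg : ContDiffOn ℝ 1 g U)
    (lam : X → ℝ) (hlampos : ∀ x ∈ U, 0 < lam x)
    (heq : ∀ x ∈ U, fderiv ℝ f x = lam x • g x)
    (hsec : ∀ x ∈ U, ∀ w : X, w ≠ 0 → g x w = 0 → fderiv ℝ g x w w < 0) :
    ∀ x ∈ U, ∀ y ∈ U, x ≠ y → ∀ t ∈ Ioo (0:ℝ) 1,
      min (f x) (f y) < f ((1 - t) • x + t • y) := by
  intro x hx y hy hxy t ht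
  have hL : ∀ s ∈ Icc (0:ℝ) 1, lineMap x y s ∈ U := fun s hs => hUc.lineMap_mem hx hy hs
  have hφ : ∀ s ∈ Icc (0:ℝ) 1, HasDerivAt (fun s => f (lineMap x y s))
      (lam (lineMap x y s) * g (lineMap x y s) (y - x)) s := fun s hs => by
    simpa [heq _ (hL s hs)] using hasDerivAt_comp_lineMap ((hf.differentiableOn one_ne_zero).differentiableAt (hU.mem_nhds (hL s hs)))
  have hψ : ∀ s ∈ Icc (0:ℝ) 1, HasDerivAt (fun s => g (lineMap x y s) (y - x))
      (fderiv ℝ g (lineMap x y s) (y - x) (y - x)) s := fun s hs => by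
    simpa using (hasDerivAt_comp_lineMap ((hg.differentiableOn one_ne_zero).differentiableAt (hU.mem_nhds (hL s hs)))).clm_apply (hasDerivAt_const s (y - x))
  have hloc : ∀ s ∈ Ioo (0:ℝ) 1, ¬IsLocalMin (fun s => f (lineMap x y s)) s := by
    intro s hs
    have hnhds : ∀ᶠ r in 𝓝 s, r ∈ Icc (0:ℝ) 1 := Icc_mem_nhds hs.1 hs.2
    refine not_isLocalMin_of_hasDerivAt_mul (hnhds.mono hφ)
      (hnhds.mono fun r hr => hlampos _ (hL r hr)) fun hzero => ?_
    exact ⟨_, hsec _ (hL s (Ioo_subset_Icc_self hs)) _ (sub_ne_zero.2 hxy.symm) hzero,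
      hψ s (Ioo_subset_Icc_self hs)⟩
  simpa [lineMap_apply_module] using min_lt_of_forall_not_isLocalMin
    (fun s hs => (hφ s hs).continuousAt.continuousWithinAt) hloc ht

theorem stmt_3 {X : Type*} [NormedAddCommGroup X] [NormedSpace ℝ X] [CompleteSpace X]
    (U : Set X) (hU : IsOpen U) (hUc : Convex ℝ U)
    (f : X → ℝ) (hf : ContDiffOn ℝ 1 f U)
    (g : X → (X →L[ℝ] ℝ)) (hg : ContDiffOn ℝ 1 g U)
    (lam : X → ℝ) (hlamc : ContinuousOn lam U) (hlampos : ∀ x ∈ U, 0 < lam x)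
    (heq : ∀ x ∈ U, fderiv ℝ f x = lam x • g x)
    (hsec : ∀ x ∈ U, ∀ w : X, w ≠ 0 → g x w = 0 → fderiv ℝ g x w w < 0) :
    ∀ x ∈ U, ∀ y ∈ U, x ≠ y → ∀ t ∈ Ioo (0:ℝ) 1,
      min (f x) (f y) < f ((1 - t) • x + t • y) :=
  stmt_3_general U hU hUc f hf g hg lam hlampos heq hsec
end

section
/- Let $U\subset\mathbb{R}^n$ be open and convex and $f:U\to\mathbb{R}$ be $C^2$ with $\nabla f(x)\ne 0$ for all $x\in U$. Then $f$ is quasi-concave if and only if $v^T D^2 f(x) v\le 0$ for every $x\in U$ and $v\in\mathbb{R}^n$ with $\nabla f(x)\cdot v=0$. -/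
/-!
If `Df x v = 0` and `D²f x (v, v) > 0`, then `s ↦ f (x + s • v)` has a strict local minimum at
`0`; as `x` is the midpoint of `x - s • v` and `x + s • v`, this contradicts quasi-concavity.

Conversely, if quasi-concavity failed on a segment, the minimisers of `f` on the segment would
form a nonempty closed set of interior points, which therefore cannot be open. But it is open: at
an interior minimiser `z`, with `d` the direction of the segment, `Df z d = 0`; pick `p` with
`Df z p = 1`. By the implicit function theorem the level set of `f` through `z` is locally a curve
`γ t = x + t • d + σ t • p`. Differentiating `f ∘ γ` twice gives
`σ'' · Df p = -D²f (γ', γ') ≥ 0` (as `γ'` is tangent), so with `σ' = 0` at `z` we get `σ ≥ 0`;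
on the other hand `f` increases in direction `p` and `f ≥ f z` along the segment, so `σ ≤ 0`.
Thus `σ = 0` and `f` is constant along the segment near `z`.
-/

open Set Filter Topology

theorem eventually_lt_of_deriv_deriv_pos {g : ℝ → ℝ} {x₀ : ℝ}
    (hg : ∀ᶠ x in 𝓝 x₀, DifferentiableAt ℝ g x) (h₁ : deriv g x₀ = 0)
    (h₂ : 0 < deriv (deriv g) x₀) :
    ∀ᶠ x in 𝓝[≠] x₀, g x₀ < g x := by
  obtain ⟨ε, hε, hI⟩ := (nhds_basis_Ioo_pos x₀).eventually_iff.1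
    (hg.and (eventually_nhdsWithin_sign_eq_of_deriv_pos h₂ h₁))
  have hcont : ContinuousOn g (Ioo (x₀ - ε) (x₀ + ε)) := fun x hx =>
    (hI hx).1.continuousAt.continuousWithinAt
  filter_upwards [nhdsWithin_le_nhds (Ioo_mem_nhds (sub_lt_self x₀ hε) (lt_add_of_pos_right x₀ hε)),
    self_mem_nhdsWithin] with x hx (hne : x ≠ x₀)
  rcases hne.lt_or_gt with hlt | hgt
  · have hsub : Icc x x₀ ⊆ Ioo (x₀ - ε) (x₀ + ε) := Icc_subset_Ioo hx.1 (by linarith)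
    refine strictAntiOn_of_deriv_neg (convex_Icc x x₀) (hcont.mono hsub) (fun c hc => ?_)
      (left_mem_Icc.2 hlt.le) (right_mem_Icc.2 hlt.le) hlt
    rw [interior_Icc] at hc
    rw [← sign_eq_neg_one_iff, (hI (hsub (Ioo_subset_Icc_self hc))).2, sign_eq_neg_one_iff,
      sub_neg]
    exact hc.2
  · have hsub : Icc x₀ x ⊆ Ioo (x₀ - ε) (x₀ + ε) := Icc_subset_Ioo (by linarith) hx.2
    refine strictMonoOn_of_deriv_pos (convex_Icc x₀ x) (hcont.mono hsub) (fun c hc => ?_)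
      (left_mem_Icc.2 hgt.le) (right_mem_Icc.2 hgt.le) hgt
    rw [interior_Icc] at hc
    rw [← sign_eq_one_iff, (hI (hsub (Ioo_subset_Icc_self hc))).2, sign_eq_one_iff, sub_pos]
    exact hc.1

theorem isLocalMin_of_deriv_eq_zero_of_deriv2_nonneg {g g' g'' : ℝ → ℝ} {x₀ : ℝ}
    (hg : ∀ᶠ x in 𝓝 x₀, HasDerivAt g (g' x) x) (hg' : ∀ᶠ x in 𝓝 x₀, HasDerivAt g' (g'' x) x)
    (hg'' : ∀ᶠ x in 𝓝 x₀, 0 ≤ g'' x) (h₀ : g' x₀ = 0) : IsLocalMin g x₀ := by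
  obtain ⟨ε, hε, hball⟩ := Metric.eventually_nhds_iff_ball.1 (hg.and (hg'.and hg''))
  have hconv : ConvexOn ℝ (Metric.ball x₀ ε) g := by
    refine convexOn_of_hasDerivWithinAt2_nonneg (f' := g') (f'' := g'') (convex_ball x₀ ε)
      (fun x hx => (hball x hx).1.continuousAt.continuousWithinAt) ?_ ?_ ?_ <;>
      rw [Metric.isOpen_ball.interior_eq] <;> intro x hx
    exacts [(hball x hx).1.hasDerivWithinAt, (hball x hx).2.1.hasDerivWithinAt, (hball x hx).2.2]
  refine IsMinOn.isLocalMin ?_ (Metric.ball_mem_nhds x₀ hε)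
  refine hconv.isMinOn_of_rightDeriv_eq_zero (by simpa [Metric.isOpen_ball.interior_eq]) ?_
  rw [(hball x₀ (Metric.mem_ball_self hε)).1.hasDerivWithinAt.derivWithin
    (uniqueDiffWithinAt_Ioi x₀), h₀]

theorem min_le_of_forall_isLocalMin_eventuallyEq {g : ℝ → ℝ} {a b t : ℝ}
    (hg : ContinuousOn g (Icc a b))
    (hloc : ∀ c ∈ Ioo a b, IsLocalMin g c → ∀ᶠ s in 𝓝 c, g s = g c) (ht : t ∈ Icc a b) :
    min (g a) (g b) ≤ g t := by
  by_contra! hlt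
  obtain ⟨m, hm, hmin⟩ := isCompact_Icc.exists_isMinOn ⟨t, ht⟩ hg
  have hm_lt : g m < min (g a) (g b) := (hmin ht).trans_lt hlt
  set S := Icc a b ∩ g ⁻¹' {g m}
  have hS_Ioo : S ⊆ Ioo a b := by
    rintro s ⟨hs, hgs : g s = g m⟩
    refine ⟨hs.1.lt_of_ne ?_, hs.2.lt_of_ne ?_⟩ <;> rintro rfl
    · exact hm_lt.not_ge (hgs ▸ min_le_left _ _)
    · exact hm_lt.not_ge (hgs ▸ min_le_right _ _)
  have hclosed : IsClosed S := hg.preimage_isClosed_of_isClosed isClosed_Icc isClosed_singleton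
  have hopen : IsOpen S := by
    refine isOpen_iff_mem_nhds.2 fun s hs => ?_
    have hIcc : Icc a b ∈ 𝓝 s := Icc_mem_nhds (hS_Ioo hs).1 (hS_Ioo hs).2
    have hmin_s : IsMinOn g (Icc a b) s := fun r hr => (hs.2 : g s = g m) ▸ hmin hr
    have hlocmin : IsLocalMin g s := hmin_s.isLocalMin hIcc
    filter_upwards [hIcc, hloc s (hS_Ioo hs) hlocmin] with r hr hgr
    exact ⟨hr, hgr.trans hs.2⟩
  have ha : a ∈ S := (IsClopen.eq_univ ⟨hclosed, hopen⟩ ⟨m, hm, rfl⟩).symm ▸ mem_univ a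
  exact (hS_Ioo ha).1.false

section
variable {E F : Type*} [NormedAddCommGroup E] [NormedSpace ℝ E]
  [NormedAddCommGroup F] [NormedSpace ℝ F]

theorem hasDerivAt_add_smul (x d : E) (t : ℝ) : HasDerivAt (fun s : ℝ => x + s • d) d t := by
  simpa using ((hasDerivAt_id t).smul_const d).const_add x

theorem HasDerivAt.fderiv_apply {f : E → F} {γ w : ℝ → E} {γ' w' : E} {t : ℝ}
    (hγ : HasDerivAt γ γ' t) (hf : DifferentiableAt ℝ (fderiv ℝ f) (γ t))
    (hw : HasDerivAt w w' t) :
    HasDerivAt (fun s => fderiv ℝ f (γ s) (w s))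
      (fderiv ℝ (fderiv ℝ f) (γ t) γ' (w t) + fderiv ℝ f (γ t) w') t :=
  (hf.hasFDerivAt.comp_hasDerivAt t hγ).clm_apply hw

theorem eventually_fderiv_apply_eq_zero {f : E → F} {γ γ' : ℝ → E} {t₀ : ℝ} {c : F}
    (hγ : ∀ᶠ t in 𝓝 t₀, HasDerivAt γ (γ' t) t) (hf : ∀ᶠ t in 𝓝 t₀, DifferentiableAt ℝ f (γ t))
    (hc : ∀ᶠ t in 𝓝 t₀, f (γ t) = c) :
    ∀ᶠ t in 𝓝 t₀, fderiv ℝ f (γ t) (γ' t) = 0 := by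
  filter_upwards [hγ, hf, hc.eventually_nhds] with t hγt hft hct
  exact (hft.hasFDerivAt.comp_hasDerivAt t hγt).unique
    ((hasDerivAt_const t c).congr_of_eventuallyEq hct)

theorem eventually_fderiv_fderiv_apply_add_eq_zero {f : E → F} {γ γ' γ'' : ℝ → E} {t₀ : ℝ}
    {c : F} (hγ : ∀ᶠ t in 𝓝 t₀, HasDerivAt γ (γ' t) t)
    (hγ' : ∀ᶠ t in 𝓝 t₀, HasDerivAt γ' (γ'' t) t)
    (hf : ∀ᶠ t in 𝓝 t₀, ContDiffAt ℝ 2 f (γ t)) (hc : ∀ᶠ t in 𝓝 t₀, f (γ t) = c) :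
    ∀ᶠ t in 𝓝 t₀,
      fderiv ℝ (fderiv ℝ f) (γ t) (γ' t) (γ' t) + fderiv ℝ f (γ t) (γ'' t) = 0 := by
  have h₁ := eventually_fderiv_apply_eq_zero hγ
    (hf.mono fun t ht => ht.differentiableAt two_ne_zero) hc
  filter_upwards [hγ, hγ', hf, h₁.eventually_nhds] with t hγt hγ't hft h₁t
  exact (hγt.fderiv_apply ((hft.fderiv_right (m := 1) le_rfl).differentiableAt one_ne_zero)
    hγ't).unique ((hasDerivAt_const t 0).congr_of_eventuallyEq h₁t)

theorem fderiv_fderiv_apply_nonpos_of_quasiconcave {f : E → ℝ} {U : Set E} (hU : IsOpen U)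
    (hq : ∀ x ∈ U, ∀ y ∈ U, ∀ t ∈ Icc (0:ℝ) 1, min (f x) (f y) ≤ f ((1 - t) • x + t • y))
    {x v : E} (hx : x ∈ U) (hf : ContDiffAt ℝ 2 f x) (hv : fderiv ℝ f x v = 0) :
    fderiv ℝ (fderiv ℝ f) x v v ≤ 0 := by
  set g : ℝ → ℝ := fun s => f (x + s • v)
  have hline : Tendsto (fun s : ℝ => x + s • v) (𝓝 0) (𝓝 x) := by
    simpa using (hasDerivAt_add_smul x v 0).continuousAt.tendsto
  have hg : ∀ᶠ s in 𝓝 (0:ℝ), HasDerivAt g (fderiv ℝ f (x + s • v) v) s := by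
    filter_upwards [hline.eventually (hf.eventually (by simp))] with s hs
    exact (hs.differentiableAt two_ne_zero).hasFDerivAt.comp_hasDerivAt s
      (hasDerivAt_add_smul x v s)
  have hderiv : deriv g =ᶠ[𝓝 0] fun s => fderiv ℝ f (x + s • v) v :=
    hg.mono fun s hs => hs.deriv
  have hderiv₂ : deriv (deriv g) 0 = fderiv ℝ (fderiv ℝ f) x v v := by
    have h := (hasDerivAt_add_smul x v 0).fderiv_apply (w := fun _ => v)
      (by simpa using (hf.fderiv_right (m := 1) le_rfl).differentiableAt one_ne_zero)
      (hasDerivAt_const 0 v)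
    rw [zero_smul, add_zero, map_zero, add_zero] at h
    rw [hderiv.deriv_eq, h.deriv]
  by_contra! hpos
  have hmin := eventually_lt_of_deriv_deriv_pos
    (hg.mono fun s hs => hs.differentiableAt)
    (by simpa [hderiv.eq_of_nhds] using hv) (hderiv₂ ▸ hpos)
  have hU' : ∀ᶠ s in 𝓝[≠] (0:ℝ), x + s • v ∈ U :=
    nhdsWithin_le_nhds (hline.eventually (hU.mem_nhds hx))
  have hneg : Tendsto (fun s : ℝ => -s) (𝓝[≠] 0) (𝓝[≠] 0) :=
    tendsto_nhdsWithin_iff.2 ⟨(continuous_neg.tendsto' 0 0 neg_zero).mono_left nhdsWithin_le_nhds,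
      eventually_mem_nhdsWithin.mono fun _ hs => neg_ne_zero.2 hs⟩
  obtain ⟨s, ⟨hlt, hmem⟩, hlt', hmem'⟩ :=
    ((hmin.and hU').and (hneg.eventually (hmin.and hU'))).exists
  have hmid : (1 - (1/2 : ℝ)) • (x + (-s) • v) + (1/2 : ℝ) • (x + s • v) = x := by module
  have := hq _ hmem' _ hmem (1/2) ⟨by norm_num, by norm_num⟩
  rw [hmid] at this
  exact this.not_gt (lt_min (by simpa [g] using hlt') (by simpa [g] using hlt))

theorem exists_contDiffAt_levelCurve {f : E → ℝ} {x d p : E} {c : ℝ} {n : WithTop ℕ∞}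
    (hf : ContDiffAt ℝ n f (x + c • d)) (hn : n ≠ 0) (hp : fderiv ℝ f (x + c • d) p = 1) :
    ∃ σ : ℝ → ℝ, ContDiffAt ℝ n σ c ∧ σ c = 0 ∧
      ∀ᶠ t in 𝓝 c, f (x + t • d + σ t • p) = f (x + c • d) := by
  set F : ℝ × ℝ → ℝ := fun u => f (x + u.1 • d + u.2 • p)
  have hA : ContDiff ℝ n fun u : ℝ × ℝ => x + u.1 • d + u.2 • p := by fun_prop
  have hF : ContDiffAt ℝ n F (c, 0) := by
    refine ContDiffAt.comp (c, 0) ?_ hA.contDiffAt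
    simpa using hf
  have hF₂ : fderiv ℝ F (c, 0) ∘L .inr ℝ ℝ ℝ = .id ℝ ℝ := by
    refine ContinuousLinearMap.ext_ring ?_
    have h₁ : HasDerivAt (fun s : ℝ => F (c, s)) (fderiv ℝ F (c, 0) (0, 1)) 0 :=
      (hF.differentiableAt hn).hasFDerivAt.comp_hasDerivAt 0
        ((hasDerivAt_const 0 c).prodMk (hasDerivAt_id 0))
    have h₂ : HasDerivAt (fun s : ℝ => F (c, s)) 1 0 := by
      have := (hf.differentiableAt hn).hasFDerivAt.comp_hasDerivAt_of_eq 0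
        (hasDerivAt_add_smul (x + c • d) p 0) (by simp)
      simpa [F, hp, Function.comp_def] using this
    simpa using h₁.unique h₂
  have if₂ : (fderiv ℝ F (c, 0) ∘L .inr ℝ ℝ ℝ).IsInvertible :=
    hF₂ ▸ ⟨ContinuousLinearEquiv.refl ℝ ℝ, rfl⟩
  refine ⟨hF.implicitFunction hn if₂, hF.contDiffAt_implicitFunction hn if₂,
    hF.implicitFunction_apply_self hn if₂, ?_⟩
  simpa [F] using hF.eventually_apply_implicitFunction hn if₂

theorem Convex.apply_lt_apply_add_of_fderiv_pos {f : E → ℝ} {B : Set E} (hB : Convex ℝ B)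
    (hf : ∀ y ∈ B, DifferentiableAt ℝ f y) {w v : E} (hv : ∀ y ∈ B, 0 < fderiv ℝ f y v)
    (hw : w ∈ B) (hwv : w + v ∈ B) : f w < f (w + v) := by
  obtain ⟨y, hy, hmvt⟩ := domain_mvt (fun y hy => (hf y hy).hasFDerivAt.hasFDerivWithinAt) hB hw hwv
  rw [add_sub_cancel_left] at hmvt
  linarith [hv y (hB.segment_subset hw hwv hy)]

theorem isLocalMin_of_levelCurve {f : E → ℝ} {x d p : E} {c : ℝ} {σ : ℝ → ℝ}
    (hf : ContDiffAt ℝ 2 f (x + c • d))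
    (hq : ∀ᶠ y in 𝓝 (x + c • d), ∀ v, fderiv ℝ f y v = 0 → fderiv ℝ (fderiv ℝ f) y v v ≤ 0)
    (hd : fderiv ℝ f (x + c • d) d = 0) (hp : 0 < fderiv ℝ f (x + c • d) p)
    (hσ : ContDiffAt ℝ 2 σ c) (hσc : σ c = 0)
    (hlevel : ∀ᶠ t in 𝓝 c, f (x + t • d + σ t • p) = f (x + c • d)) :
    IsLocalMin σ c := by
  set γ : ℝ → E := fun t => x + t • d + σ t • p
  set γ' : ℝ → E := fun t => d + deriv σ t • p
  have hσ' : ∀ᶠ t in 𝓝 c, HasDerivAt σ (deriv σ t) t ∧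
      HasDerivAt (deriv σ) (deriv (deriv σ) t) t := by
    filter_upwards [hσ.eventually (by simp)] with t ht
    exact ⟨(ht.differentiableAt two_ne_zero).hasDerivAt,
      ((ht.fderiv_right (m := 1) le_rfl).clm_apply contDiffAt_const).differentiableAt
        one_ne_zero |>.hasDerivAt⟩
  have hγ : ∀ᶠ t in 𝓝 c, HasDerivAt γ (γ' t) t := hσ'.mono fun t ht =>
    (hasDerivAt_add_smul x d t).add (ht.1.smul_const p)
  have hγ' : ∀ᶠ t in 𝓝 c, HasDerivAt γ' (deriv (deriv σ) t • p) t := hσ'.mono fun t ht =>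
    (ht.2.smul_const p).const_add d
  have hγc : γ c = x + c • d := by simp [γ, hσc]
  have hγ_tendsto : Tendsto γ (𝓝 c) (𝓝 (x + c • d)) :=
    hγc ▸ hγ.self_of_nhds.continuousAt.tendsto
  have hp_near : ∀ᶠ y in 𝓝 (x + c • d), 0 < fderiv ℝ f y p :=
    ((hf.continuousAt_fderiv two_ne_zero).clm_apply continuousAt_const).eventually
      (lt_mem_nhds hp)
  have hfγ := hγ_tendsto.eventually ((hf.eventually (by simp)).and (hq.and hp_near))
  have h₁ := eventually_fderiv_apply_eq_zero hγ
    (hfγ.mono fun t ht => ht.1.differentiableAt two_ne_zero) hlevel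
  have h₂ := eventually_fderiv_fderiv_apply_add_eq_zero hγ hγ' (hfγ.mono fun t ht => ht.1) hlevel
  have hσ'c : deriv σ c = 0 := by
    have h := h₁.self_of_nhds
    rw [hγc, map_add, hd, map_smul, smul_eq_mul, zero_add] at h
    exact (mul_eq_zero.1 h).resolve_right hp.ne'
  refine isLocalMin_of_deriv_eq_zero_of_deriv2_nonneg (hσ'.mono fun t ht => ht.1)
    (hσ'.mono fun t ht => ht.2) ?_ hσ'c
  filter_upwards [hfγ, h₁, h₂] with t ⟨_, hqt, hpt⟩ h₁t h₂t
  rw [map_smul, smul_eq_mul] at h₂t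
  exact nonneg_of_mul_nonneg_left (by linarith [hqt _ h₁t]) hpt

theorem IsLocalMin.eventually_eq_of_fderiv_ne_zero {f : E → ℝ} {x d : E} {c : ℝ}
    (hmin : IsLocalMin (fun s : ℝ => f (x + s • d)) c) (hf : ContDiffAt ℝ 2 f (x + c • d))
    (hDf : fderiv ℝ f (x + c • d) ≠ 0)
    (hq : ∀ᶠ y in 𝓝 (x + c • d), ∀ v, fderiv ℝ f y v = 0 → fderiv ℝ (fderiv ℝ f) y v v ≤ 0) :
    ∀ᶠ s in 𝓝 c, f (x + s • d) = f (x + c • d) := by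
  set z := x + c • d
  have hd : fderiv ℝ f z d = 0 := hmin.hasDerivAt_eq_zero
    ((hf.differentiableAt two_ne_zero).hasFDerivAt.comp_hasDerivAt c (hasDerivAt_add_smul x d c))
  obtain ⟨w, hw⟩ : ∃ w, fderiv ℝ f z w ≠ 0 := by
    by_contra! h
    exact hDf (ContinuousLinearMap.ext h)
  set p := (fderiv ℝ f z w)⁻¹ • w
  have hp : fderiv ℝ f z p = 1 := by simp [p, hw]
  obtain ⟨σ, hσ, hσc, hlevel⟩ := exists_contDiffAt_levelCurve hf two_ne_zero hp
  have hσmin := isLocalMin_of_levelCurve hf hq hd (hp ▸ one_pos) hσ hσc hlevel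
  obtain ⟨ε, hε, hball⟩ := Metric.eventually_nhds_iff_ball.1
    ((hf.eventually (by simp)).and
      (((hf.continuousAt_fderiv two_ne_zero).clm_apply continuousAt_const).eventually
        (lt_mem_nhds (hp ▸ one_pos : 0 < fderiv ℝ f z p))))
  have hline : Tendsto (fun s : ℝ => x + s • d) (𝓝 c) (𝓝 z) :=
    (hasDerivAt_add_smul x d c).continuousAt.tendsto
  have hcurve : Tendsto (fun s => x + s • d + σ s • p) (𝓝 c) (𝓝 z) := by
    simpa [hσc] using hline.add ((hσ.continuousAt.tendsto).smul_const p)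
  filter_upwards [hmin, hσmin, hlevel, hline.eventually (Metric.ball_mem_nhds z hε),
    hcurve.eventually (Metric.ball_mem_nhds z hε)] with s hs hσs hlev h₁ h₂
  have hσs_nonpos : σ s ≤ 0 := by
    by_contra! hpos
    have := (convex_ball z ε).apply_lt_apply_add_of_fderiv_pos
      (fun y hy => (hball y hy).1.differentiableAt two_ne_zero)
      (fun y hy => by simpa [map_smul] using mul_pos hpos (hball y hy).2) h₁ h₂
    linarith
  have : σ s = 0 := le_antisymm hσs_nonpos (hσc ▸ hσs)
  simpa [this] using hlev

theorem min_le_apply_of_fderiv_fderiv_nonpos {f : E → ℝ} {U : Set E} (hU : IsOpen U)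
    (hUc : Convex ℝ U) (hf : ContDiffOn ℝ 2 f U) (hDf : ∀ x ∈ U, fderiv ℝ f x ≠ 0)
    (hq : ∀ x ∈ U, ∀ v, fderiv ℝ f x v = 0 → fderiv ℝ (fderiv ℝ f) x v v ≤ 0)
    {x y : E} (hx : x ∈ U) (hy : y ∈ U) {t : ℝ} (ht : t ∈ Icc (0:ℝ) 1) :
    min (f x) (f y) ≤ f ((1 - t) • x + t • y) := by
  have hseg : MapsTo (fun s : ℝ => x + s • (y - x)) (Icc 0 1) U :=
    fun s hs => hUc.add_smul_sub_mem hx hy hs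
  have hmin := min_le_of_forall_isLocalMin_eventuallyEq (g := fun s => f (x + s • (y - x)))
    (hf.continuousOn.comp (by fun_prop) hseg)
    (fun c hc hmin => hmin.eventually_eq_of_fderiv_ne_zero
      (hf.contDiffAt (hU.mem_nhds (hseg (Ioo_subset_Icc_self hc))))
      (hDf _ (hseg (Ioo_subset_Icc_self hc)))
      (eventually_of_mem (hU.mem_nhds (hseg (Ioo_subset_Icc_self hc))) hq)) ht
  convert hmin using 2
  · simp
  · simp
  · module

end

theorem stmt_4 {n : ℕ} (U : Set (EuclideanSpace ℝ (Fin n)))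
    (hU : IsOpen U) (hUc : Convex ℝ U)
    (f : EuclideanSpace ℝ (Fin n) → ℝ) (hf : ContDiffOn ℝ 2 f U)
    (hDf : ∀ x ∈ U, fderiv ℝ f x ≠ 0) :
    (∀ x ∈ U, ∀ y ∈ U, ∀ t ∈ Icc (0:ℝ) 1,
        min (f x) (f y) ≤ f ((1 - t) • x + t • y)) ↔
    (∀ x ∈ U, ∀ v : EuclideanSpace ℝ (Fin n),
        fderiv ℝ f x v = 0 → fderiv ℝ (fderiv ℝ f) x v v ≤ 0) :=
  ⟨fun hq _ hx _ hv => fderiv_fderiv_apply_nonpos_of_quasiconcave hU hq hx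
      (hf.contDiffAt (hU.mem_nhds hx)) hv,
    fun hq _ hx _ hy _ ht => min_le_apply_of_fderiv_fderiv_nonpos hU hUc hf hDf hq hx hy ht⟩
end

section
/- The function $f(x_1,x_2)=x_1^3 x_2 + x_1 x_2^3$ on $U=\{(x_1,x_2): x_1>0,\ x_2>0\}$ is strictly quasi-concave, yet at the point $(1,1)$, the vector $v=(1,-1)$ satisfies $\nabla f(1,1)\cdot v=0$ and $v^T D^2f(1,1) v = 0$ (not $<0$). -/
/-!
In the coordinates `u = x₁ + x₂`, `v = x₁ - x₂` the function becomes `8 f = u⁴ - v⁴` on the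
cone `|v| < u`. Its fourth root `u · (1 - (v/u)⁴)^(1/4)` is the perspective of the strictly
concave arc `r ↦ (1 - r⁴)^(1/4)` of the unit `ℓ⁴`-circle, hence concave, strictly so across
rays, and linear but non-constant along any segment inside a ray. Either way it exceeds the
minimum of its endpoint values in the interior of a segment, and raising to the fourth power
preserves this.
-/

open Set ContinuousLinearMap

theorem min_lt_convex_combo {a b t : ℝ} (hab : a ≠ b) (ht : t ∈ Ioo 0 1) :
    min a b < (1 - t) * a + t * b := by
  obtain ⟨ht₀, ht₁⟩ := ht
  rcases hab.lt_or_gt with h | h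
  · rw [min_eq_left h.le]; nlinarith
  · rw [min_eq_right h.le]; nlinarith

theorem StrictConcaveOn.lt_perspective {s : Set ℝ} {H : ℝ → ℝ} (hH : StrictConcaveOn ℝ s H)
    {u₁ u₂ v₁ v₂ a b : ℝ} (hu₁ : 0 < u₁) (hu₂ : 0 < u₂) (h₁ : v₁ / u₁ ∈ s) (h₂ : v₂ / u₂ ∈ s)
    (hne : v₁ / u₁ ≠ v₂ / u₂) (ha : 0 < a) (hb : 0 < b) :
    a * (u₁ * H (v₁ / u₁)) + b * (u₂ * H (v₂ / u₂)) <
      (a * u₁ + b * u₂) * H ((a * v₁ + b * v₂) / (a * u₁ + b * u₂)) := by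
  set U := a * u₁ + b * u₂
  have hU : 0 < U := by positivity
  have key := hH.2 h₁ h₂ hne (div_pos (mul_pos ha hu₁) hU) (div_pos (mul_pos hb hu₂) hU)
    (by rw [← add_div, div_self hU.ne'])
  have hmix : a * u₁ / U * (v₁ / u₁) + b * u₂ / U * (v₂ / u₂) = (a * v₁ + b * v₂) / U := by
    field_simp
  rw [smul_eq_mul, smul_eq_mul, smul_eq_mul, smul_eq_mul, hmix] at key
  calc a * (u₁ * H (v₁ / u₁)) + b * (u₂ * H (v₂ / u₂))
      = U * (a * u₁ / U * H (v₁ / u₁) + b * u₂ / U * H (v₂ / u₂)) := by field_simp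
    _ < U * H ((a * v₁ + b * v₂) / U) := mul_lt_mul_of_pos_left key hU

def StrictQuasiconcaveOn {E : Type*} [AddCommGroup E] [Module ℝ E] (s : Set E) (f : E → ℝ) :
    Prop :=
  ∀ x ∈ s, ∀ y ∈ s, x ≠ y → ∀ t ∈ Ioo (0 : ℝ) 1, min (f x) (f y) < f ((1 - t) • x + t • y)

section StrictQuasiconcaveOn

variable {E : Type*} [AddCommGroup E] [Module ℝ E] {s : Set E} {f g : E → ℝ}

theorem StrictQuasiconcaveOn.congr (hf : StrictQuasiconcaveOn s f) (hs : Convex ℝ s)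
    (hfg : EqOn f g s) : StrictQuasiconcaveOn s g := by
  intro x hx y hy hxy t ht
  have hz : (1 - t) • x + t • y ∈ s :=
    hs hx hy (sub_nonneg.2 ht.2.le) ht.1.le (sub_add_cancel 1 t)
  rw [← hfg hx, ← hfg hy, ← hfg hz]
  exact hf x hx y hy hxy t ht

theorem StrictQuasiconcaveOn.strictMonoOn_comp {t : Set ℝ} {h : ℝ → ℝ}
    (hf : StrictQuasiconcaveOn s f) (hs : Convex ℝ s) (hft : MapsTo f s t)
    (hh : StrictMonoOn h t) : StrictQuasiconcaveOn s (h ∘ f) := by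
  intro x hx y hy hxy τ hτ
  have hz : (1 - τ) • x + τ • y ∈ s :=
    hs hx hy (sub_nonneg.2 hτ.2.le) hτ.1.le (sub_add_cancel 1 τ)
  rcases min_lt_iff.1 (hf x hx y hy hxy τ hτ) with hlt | hlt
  · exact min_lt_iff.2 (.inl (hh (hft hx) (hft hz) hlt))
  · exact min_lt_iff.2 (.inr (hh (hft hy) (hft hz) hlt))

end StrictQuasiconcaveOn

/-- The upper half of the unit circle of the `ℓ⁴` norm: `r ^ 4 + l4Arc r ^ 4 = 1` on `[-1, 1]`. -/
noncomputable def l4Arc (r : ℝ) : ℝ := (1 - r ^ 4) ^ (4⁻¹ : ℝ)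

theorem one_sub_pow_four_nonneg {r : ℝ} (hr : r ∈ Icc (-1) 1) : 0 ≤ 1 - r ^ 4 := by
  rw [sub_nonneg, ← Even.pow_abs (by decide)]
  exact pow_le_one₀ (abs_nonneg r) (abs_le.2 hr)

theorem l4Arc_pow_four {r : ℝ} (hr : r ∈ Icc (-1) 1) : l4Arc r ^ 4 = 1 - r ^ 4 := by
  simpa [l4Arc] using Real.rpow_inv_natCast_pow (one_sub_pow_four_nonneg hr) four_ne_zero

theorem l4Arc_pos {r : ℝ} (hr : r ∈ Ioo (-1) 1) : 0 < l4Arc r := by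
  refine Real.rpow_pos_of_pos ?_ _
  rw [sub_pos, ← Even.pow_abs (by decide)]
  exact pow_lt_one₀ (abs_nonneg r) (abs_lt.2 hr) four_ne_zero

theorem strictConcaveOn_l4Arc : StrictConcaveOn ℝ (Icc (-1) 1) l4Arc := by
  have hpow : StrictConcaveOn ℝ (Icc (-1) 1) fun r : ℝ => 1 - r ^ 4 :=
    (concaveOn_const 1 (convex_Icc _ _)).sub_strictConvexOn
      ((Even.strictConvexOn_pow (n := 4) (by decide) (by norm_num)).subset (subset_univ _)
        (convex_Icc _ _))
  have hmaps : MapsTo (fun r : ℝ => 1 - r ^ 4) (Icc (-1) 1) (Ici 0) :=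
    fun _ hr => one_sub_pow_four_nonneg hr
  have himage : Convex ℝ ((fun r : ℝ => 1 - r ^ 4) '' Icc (-1) 1) :=
    (isPreconnected_Icc.image _ (by fun_prop)).convex
  exact ((Real.strictConcaveOn_rpow (p := 4⁻¹) (by norm_num) (by norm_num)).concaveOn.subset
    hmaps.image_subset himage).comp_strictConcaveOn hpow
    ((Real.strictMonoOn_rpow_Ici_of_exponent_pos (by norm_num)).mono hmaps.image_subset)

theorem sub_div_add_mem_Ioo {a b : ℝ} (ha : 0 < a) (hb : 0 < b) :
    (a - b) / (a + b) ∈ Ioo (-1) 1 := by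
  rw [mem_Ioo, lt_div_iff₀ (by positivity), div_lt_one (by positivity)]
  constructor <;> linarith

def katzner (p : ℝ × ℝ) : ℝ := p.1 ^ 3 * p.2 + p.1 * p.2 ^ 3

/-- `(8 · katzner) ^ (1/4)` on the open quadrant, as the perspective of `l4Arc` in the
coordinates `u = x₁ + x₂`, `v = x₁ - x₂`, in which `8 · katzner = u⁴ - v⁴`. -/
noncomputable def katznerRoot (x : ℝ × ℝ) : ℝ :=
  (x.1 + x.2) * l4Arc ((x.1 - x.2) / (x.1 + x.2))

theorem katznerRoot_pos {x : ℝ × ℝ} (hx : 0 < x.1 ∧ 0 < x.2) : 0 < katznerRoot x :=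
  mul_pos (by linarith) (l4Arc_pos (sub_div_add_mem_Ioo hx.1 hx.2))

theorem katzner_eq_katznerRoot_pow {x : ℝ × ℝ} (hx : 0 < x.1 ∧ 0 < x.2) :
    katzner x = katznerRoot x ^ 4 / 8 := by
  have hu : x.1 + x.2 ≠ 0 := by linarith
  rw [katznerRoot, mul_pow, l4Arc_pow_four (Ioo_subset_Icc_self (sub_div_add_mem_Ioo hx.1 hx.2)),
    katzner]
  field_simp
  ring

theorem katznerRoot_smul_add_smul (a b : ℝ) (x y : ℝ × ℝ) :
    katznerRoot (a • x + b • y) = (a * (x.1 + x.2) + b * (y.1 + y.2)) *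
      l4Arc ((a * (x.1 - x.2) + b * (y.1 - y.2)) / (a * (x.1 + x.2) + b * (y.1 + y.2))) := by
  simp only [katznerRoot, Prod.fst_add, Prod.snd_add, Prod.smul_fst, Prod.smul_snd, smul_eq_mul]
  ring_nf

theorem strictQuasiconcaveOn_katznerRoot :
    StrictQuasiconcaveOn {p : ℝ × ℝ | 0 < p.1 ∧ 0 < p.2} katznerRoot := by
  rintro x hx y hy hxy t ht
  have hu₁ : 0 < x.1 + x.2 := by linarith [hx.1, hx.2]
  have hu₂ : 0 < y.1 + y.2 := by linarith [hy.1, hy.2]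
  by_cases hr : (x.1 - x.2) / (x.1 + x.2) = (y.1 - y.2) / (y.1 + y.2)
  · -- `x` and `y` lie on one ray, along which `katznerRoot` is linear.
    set r := (x.1 - x.2) / (x.1 + x.2)
    have hv₁ : x.1 - x.2 = r * (x.1 + x.2) := (div_mul_cancel₀ _ hu₁.ne').symm
    have hv₂ : y.1 - y.2 = r * (y.1 + y.2) := by rw [hr]; exact (div_mul_cancel₀ _ hu₂.ne').symm
    have hkx : katznerRoot x = (x.1 + x.2) * l4Arc r := rfl
    have hky : katznerRoot y = (y.1 + y.2) * l4Arc r := by rw [hr]; rfl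
    have hU : 0 < (1 - t) * (x.1 + x.2) + t * (y.1 + y.2) := by
      have := ht.1; have := ht.2; positivity
    have hkz : katznerRoot ((1 - t) • x + t • y) =
        ((1 - t) * (x.1 + x.2) + t * (y.1 + y.2)) * l4Arc r := by
      rw [katznerRoot_smul_add_smul, hv₁, hv₂]
      congr 2
      field_simp
    have hne : katznerRoot x ≠ katznerRoot y := by
      intro h
      rw [hkx, hky] at h
      have hu := mul_right_cancel₀ (l4Arc_pos (sub_div_add_mem_Ioo hx.1 hx.2)).ne' h
      rw [hu] at hv₁
      exact hxy (Prod.ext (by linarith) (by linarith))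
    rw [hkz, add_mul, mul_assoc, mul_assoc, ← hkx, ← hky]
    exact min_lt_convex_combo hne ht
  · calc min (katznerRoot x) (katznerRoot y)
        ≤ (1 - t) * katznerRoot x + t * katznerRoot y :=
          Convex.min_le_combo _ _ (sub_nonneg.2 ht.2.le) ht.1.le (sub_add_cancel 1 t)
      _ < katznerRoot ((1 - t) • x + t • y) := by
        rw [katznerRoot_smul_add_smul]
        exact strictConcaveOn_l4Arc.lt_perspective hu₁ hu₂
          (Ioo_subset_Icc_self (sub_div_add_mem_Ioo hx.1 hx.2))
          (Ioo_subset_Icc_self (sub_div_add_mem_Ioo hy.1 hy.2)) hr (sub_pos.2 ht.2) ht.1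

theorem strictQuasiconcaveOn_katzner :
    StrictQuasiconcaveOn {p : ℝ × ℝ | 0 < p.1 ∧ 0 < p.2} katzner := by
  have hconvex : Convex ℝ {p : ℝ × ℝ | 0 < p.1 ∧ 0 < p.2} := (convex_Ioi 0).prod (convex_Ioi 0)
  have hmono : StrictMonoOn (fun r : ℝ => r ^ 4 / 8) (Ici 0) := fun a ha b _ hab => by
    have := pow_lt_pow_left₀ hab ha four_ne_zero
    dsimp only; linarith
  exact (strictQuasiconcaveOn_katznerRoot.strictMonoOn_comp hconvex
    (fun _ hx => (katznerRoot_pos hx).le) hmono).congr hconvex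
    (fun _ hx => (katzner_eq_katznerRoot_pow hx).symm)

theorem fderiv_katzner (x : ℝ × ℝ) : fderiv ℝ katzner x =
    (3 * x.1 ^ 2 * x.2 + x.2 ^ 3) • fst ℝ ℝ ℝ + (x.1 ^ 3 + 3 * x.1 * x.2 ^ 2) • snd ℝ ℝ ℝ := by
  unfold katzner
  simp (disch := fun_prop) only [fderiv_fun_add, fderiv_fun_mul, fderiv_fun_pow, fderiv_fst,
    fderiv_snd]
  ext <;> simp <;> ring

theorem fderiv_fderiv_katzner_apply (x v w : ℝ × ℝ) : fderiv ℝ (fderiv ℝ katzner) x v w =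
    (6 * x.1 * x.2 * v.1 + 3 * (x.1 ^ 2 + x.2 ^ 2) * v.2) * w.1 +
      (3 * (x.1 ^ 2 + x.2 ^ 2) * v.1 + 6 * x.1 * x.2 * v.2) * w.2 := by
  have ha : DifferentiableAt ℝ (fun x : ℝ × ℝ => 3 * x.1 ^ 2 * x.2 + x.2 ^ 3) x := by fun_prop
  have hb : DifferentiableAt ℝ (fun x : ℝ × ℝ => x.1 ^ 3 + 3 * x.1 * x.2 ^ 2) x := by fun_prop
  rw [funext fderiv_katzner,
    ((ha.hasFDerivAt.smul_const (fst ℝ ℝ ℝ)).fun_add (hb.hasFDerivAt.smul_const (snd ℝ ℝ ℝ))).fderiv]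
  simp (disch := fun_prop) [fderiv_fun_add, fderiv_fun_mul, fderiv_fun_pow, fderiv_fst, fderiv_snd]
  ring

theorem stmt_7 :
    (∀ x ∈ {p : ℝ × ℝ | 0 < p.1 ∧ 0 < p.2},
     ∀ y ∈ {p : ℝ × ℝ | 0 < p.1 ∧ 0 < p.2}, x ≠ y → ∀ t ∈ Ioo (0:ℝ) 1,
        min (x.1 ^ 3 * x.2 + x.1 * x.2 ^ 3) (y.1 ^ 3 * y.2 + y.1 * y.2 ^ 3) <
          ((1 - t) • x + t • y).1 ^ 3 * ((1 - t) • x + t • y).2 +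
            ((1 - t) • x + t • y).1 * ((1 - t) • x + t • y).2 ^ 3) ∧
    fderiv ℝ (fun p : ℝ × ℝ => p.1 ^ 3 * p.2 + p.1 * p.2 ^ 3) (1, 1) (1, -1) = 0 ∧
    fderiv ℝ (fderiv ℝ (fun p : ℝ × ℝ => p.1 ^ 3 * p.2 + p.1 * p.2 ^ 3)) (1, 1)
        (1, -1) (1, -1) = 0 := by
  refine ⟨strictQuasiconcaveOn_katzner, ?_, ?_⟩
  · change fderiv ℝ katzner (1, 1) (1, -1) = 0
    norm_num [fderiv_katzner]
  · change fderiv ℝ (fderiv ℝ katzner) (1, 1) (1, -1) (1, -1) = 0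
    norm_num [fderiv_fderiv_katzner_apply]
end

section
/- Let $f(x_1,x_2)=x_2$ for $x_2\le 0$ and $f(x_1,x_2)=\frac{x_2}{1-x_1x_2}$ for $x_2>0$; let $g(x_1,x_2)=(0,1)$ for $x_2\le 0$ and $g(x_1,x_2)=(x_2^2/\sqrt{1+x_2^4},\,1/\sqrt{1+x_2^4})$ for $x_2>0$; let $\lambda(x_1,x_2)=1$ for $x_2\le 0$ and $\lambda(x_1,x_2)=\sqrt{1+x_2^4}/(1-x_1x_2)^2$ for $x_2>0$. Then on a neighborhood of the origin where $x_1x_2<1$, $\lambda$ is positive and continuous and $\nabla f(x)=\lambda(x)g(x)$ for all $x$. -/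
/-! Off the line `x₂ = 0` the function is locally a single formula, and the quotient rule gives
`∇f = (x₂², 1) / (1 - x₁x₂)²`, which is `λ g`. On the line `x₂ = 0` both branches vanish and both
have derivative `(0, 1)` there, so the glued function has that derivative too; likewise `λ` is
continuous because its two branches both equal `1` on that line. -/

open Set ContinuousLinearMap

theorem HasFDerivAt.ite_of_eq {𝕜 E F : Type*} [NontriviallyNormedField 𝕜]
    [NormedAddCommGroup E] [NormedSpace 𝕜 E] [NormedAddCommGroup F] [NormedSpace 𝕜 F]
    {f g : E → F} {f' : E →L[𝕜] F} {x : E}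
    (P : E → Prop) [DecidablePred P] (hf : HasFDerivAt f f' x) (hg : HasFDerivAt g f' x)
    (hfg : f x = g x) : HasFDerivAt (fun y => if P y then f y else g y) f' x := by
  have hval : (if P x then f x else g x) = f x := by split_ifs <;> simp [hfg]
  have hP : HasFDerivWithinAt (fun y => if P y then f y else g y) f' {y | P y} x :=
    hf.hasFDerivWithinAt.congr (fun y hy => if_pos hy) hval
  have hnP : HasFDerivWithinAt (fun y => if P y then f y else g y) f' {y | ¬P y} x :=
    hg.hasFDerivWithinAt.congr (fun y hy => if_neg hy) (hval.trans hfg)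
  simpa [← hasFDerivWithinAt_univ, ← ofPred_or, or_not] using hP.union hnP

theorem hasFDerivAt_snd_div_one_sub_mul {x : ℝ × ℝ} (hx : x.1 * x.2 ≠ 1) :
    HasFDerivAt (fun p : ℝ × ℝ => p.2 / (1 - p.1 * p.2))
      (((1 - x.1 * x.2) ^ 2)⁻¹ • (x.2 ^ 2 • fst ℝ ℝ ℝ + snd ℝ ℝ ℝ)) x := by
  have hd : 1 - x.1 * x.2 ≠ 0 := sub_ne_zero.2 hx.symm
  have hden := (hasDerivAt_inv hd).comp_hasFDerivAt x
    (((hasFDerivAt_fst (𝕜 := ℝ) (p := x)).fun_mul (hasFDerivAt_snd (𝕜 := ℝ))).const_sub (1 : ℝ))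
  have hquot := hasFDerivAt_snd.fun_mul hden
  simp only [Function.comp_def, ← div_eq_mul_inv] at hquot
  refine hquot.congr_fderiv ?_
  ext <;> simp [field]

theorem hasFDerivAt_ite_snd_div_one_sub_mul {x : ℝ × ℝ} (hx : x.1 * x.2 ≠ 1) :
    HasFDerivAt (fun p : ℝ × ℝ => if p.2 ≤ 0 then p.2 else p.2 / (1 - p.1 * p.2))
      (if x.2 ≤ 0 then snd ℝ ℝ ℝ
        else ((1 - x.1 * x.2) ^ 2)⁻¹ • (x.2 ^ 2 • fst ℝ ℝ ℝ + snd ℝ ℝ ℝ)) x := by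
  rcases lt_trichotomy x.2 0 with hneg | hzero | hpos
  · rw [if_pos hneg.le]
    refine hasFDerivAt_snd.congr_of_eventuallyEq ?_
    filter_upwards [continuous_snd.continuousAt.eventually_lt continuousAt_const hneg] with p hp
    rw [if_pos hp.le]
  · rw [if_pos hzero.le]
    refine HasFDerivAt.ite_of_eq _ hasFDerivAt_snd ?_ (by simp [hzero])
    simpa [hzero] using hasFDerivAt_snd_div_one_sub_mul hx
  · rw [if_neg hpos.not_ge]
    refine (hasFDerivAt_snd_div_one_sub_mul hx).congr_of_eventuallyEq ?_
    filter_upwards [continuousAt_const.eventually_lt continuous_snd.continuousAt hpos] with p hp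
    rw [if_neg hp.not_ge]

theorem continuousOn_ite_one_sqrt_div :
    ContinuousOn (fun p : ℝ × ℝ =>
      if p.2 ≤ 0 then (1:ℝ) else √(1 + p.2 ^ 4) / (1 - p.1 * p.2) ^ 2) {p | p.1 * p.2 < 1} := by
  rw [continuousOn_iff_continuous_domRestrict]
  refine Continuous.if_le continuous_const ?_ (by fun_prop) continuous_const
    fun p hp => by simp [hp]
  exact (by fun_prop : Continuous _).div (by fun_prop)
    fun p => pow_ne_zero 2 (sub_pos.2 p.2).ne'

theorem stmt_11 :
    ∃ V : Set (ℝ × ℝ), IsOpen V ∧ ((0:ℝ), (0:ℝ)) ∈ V ∧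
      (∀ p ∈ V, p.1 * p.2 < 1) ∧
      ContinuousOn (fun p : ℝ × ℝ =>
          if p.2 ≤ 0 then (1:ℝ)
          else Real.sqrt (1 + p.2 ^ 4) / (1 - p.1 * p.2) ^ 2) V ∧
      (∀ p ∈ V, 0 < (if p.2 ≤ 0 then (1:ℝ)
          else Real.sqrt (1 + p.2 ^ 4) / (1 - p.1 * p.2) ^ 2)) ∧
      (∀ x ∈ V, ∀ v : ℝ × ℝ,
        fderiv ℝ (fun p : ℝ × ℝ => if p.2 ≤ 0 then p.2 else p.2 / (1 - p.1 * p.2)) x v =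
          (if x.2 ≤ 0 then (1:ℝ) else Real.sqrt (1 + x.2 ^ 4) / (1 - x.1 * x.2) ^ 2) *
            ((if x.2 ≤ 0 then ((0:ℝ), (1:ℝ))
              else (x.2 ^ 2 / Real.sqrt (1 + x.2 ^ 4), 1 / Real.sqrt (1 + x.2 ^ 4))).1 * v.1 +
             (if x.2 ≤ 0 then ((0:ℝ), (1:ℝ))
              else (x.2 ^ 2 / Real.sqrt (1 + x.2 ^ 4), 1 / Real.sqrt (1 + x.2 ^ 4))).2 * v.2)) := by
  refine ⟨{p | p.1 * p.2 < 1}, isOpen_lt (by fun_prop) continuous_const, by simp,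
    fun p hp => hp, continuousOn_ite_one_sqrt_div, fun p hp => ?_, fun x hx v => ?_⟩
  · split_ifs
    · exact one_pos
    · exact div_pos (Real.sqrt_pos.2 (by positivity)) (pow_pos (sub_pos.2 hp) 2)
  · rw [(hasFDerivAt_ite_snd_div_one_sub_mul (ne_of_lt hx)).fderiv]
    split_ifs <;> simp [field]
end

section
/- Let $g:\mathbb{R}^2\to\mathbb{R}^2$ be Debreu's vector field: $g(x)=(0,1)$ if $x_2\le 0$ and $g(x)=(x_2^2/\sqrt{1+x_2^4},\,1/\sqrt{1+x_2^4})$ if $x_2>0$. Then there is no open neighborhood $V$ of the origin, no $C^2$ function $h:V\to\mathbb{R}$, and no positive $C^1$ function $\mu:V\to\mathbb{R}$ such that $\nabla h(x)=\mu(x)g(x)$ for all $x\in V$. -/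
/-! In the upper half-plane `g` is orthogonal to `(1, -x₂ ^ 2)`, so a potential `h` of `μ • g` is
constant along the hyperbolas `1 / x₂ - x₁ = const`; in the lower half-plane it is constant along
horizontal lines. Fix `a > 0` and put `u t = h (a, t) - h (0, t)`. Then `u` is `C²` and vanishes
for `t ≤ 0`, so `u t = o(t ^ 2)`. But for `t > 0` the hyperbola through `(a, t)` meets the axis
`x₁ = 0` at a height `E` with `E - t = a E t ≥ a t ^ 2`, and `∂h/∂x₂ = μ g₂` is bounded below near
the origin, so `u t = h (0, E) - h (0, t)` is at least a positive multiple of `t ^ 2`. -/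

open Set Filter Topology Asymptotics Metric

section OneVariable

variable {F : Type*} [NormedAddCommGroup F] [NormedSpace ℝ F]

theorem DifferentiableAt.deriv_eq_zero_of_eventuallyEq_nhdsLE {f : ℝ → F} {y : ℝ}
    (hf : DifferentiableAt ℝ f y) (h0 : f =ᶠ[𝓝[≤] y] 0) : deriv f y = 0 := by
  rw [← hf.derivWithin (uniqueDiffWithinAt_Iic y),
    h0.derivWithin_eq (h0.eq_of_nhdsWithin (mem_Iic.2 le_rfl))]
  simp

theorem isLittleO_pow_of_eqOn_Ioc_zero {n : ℕ} {u : ℝ → F} {x₀ δ : ℝ} (hδ : 0 < δ)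
    (hu : ContDiffOn ℝ n u (ball x₀ δ)) (hleft : EqOn u 0 (Ioc (x₀ - δ) x₀)) :
    u =o[𝓝 x₀] fun x => (x - x₀) ^ n := by
  have hx₀ : u x₀ = 0 := hleft ⟨by linarith, le_rfl⟩
  induction n generalizing u with
  | zero =>
    simpa [isLittleO_one_iff, hx₀] using
      (hu.continuousOn.continuousAt (ball_mem_nhds x₀ hδ)).tendsto
  | succ n ih =>
    have hdiff : DifferentiableOn ℝ u (ball x₀ δ) := hu.differentiableOn (by simp)
    have hderiv_left : EqOn (deriv u) 0 (Ioc (x₀ - δ) x₀) := fun y hy => by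
      have hyδ : y ∈ ball x₀ δ := by
        rw [Real.ball_eq_Ioo]
        exact ⟨hy.1, by linarith [hy.2]⟩
      have h0 : u =ᶠ[𝓝[≤] y] 0 := by
        filter_upwards [Ioc_mem_nhdsLE hy.1] with z hz
        exact hleft ⟨hz.1, hz.2.trans hy.2⟩
      exact (hdiff.differentiableAt (isOpen_ball.mem_nhds hyδ)).deriv_eq_zero_of_eventuallyEq_nhdsLE
        h0
    have hu' := ih (hu.deriv_of_isOpen isOpen_ball (by simp)) hderiv_left
      (hderiv_left ⟨by linarith, le_rfl⟩)
    have := (convex_ball x₀ δ).isLittleO_pow_succ_real (mem_ball_self hδ)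
      (fun x hx => (hdiff.differentiableAt (isOpen_ball.mem_nhds hx)).hasDerivAt.hasDerivWithinAt)
      (hu'.mono nhdsWithin_le_nhds)
    simpa [hx₀, isOpen_ball.nhdsWithin_eq (mem_ball_self hδ)] using this

end OneVariable

theorem eq_of_forall_hasDerivAt_zero {φ : ℝ → ℝ} {a b : ℝ} (hab : a ≤ b)
    (hφ : ∀ s ∈ Icc a b, HasDerivAt φ 0 s) : φ b = φ a :=
  constant_of_has_deriv_right_zero (fun s hs => (hφ s hs).continuousAt.continuousWithinAt)
    (fun s hs => (hφ s (Ico_subset_Icc_self hs)).hasDerivWithinAt) b (right_mem_Icc.2 hab)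

theorem hasDerivAt_inv_const_add (k s : ℝ) (hks : k + s ≠ 0) :
    HasDerivAt (fun s => (k + s)⁻¹) (-((k + s)⁻¹) ^ 2) s :=
  (((hasDerivAt_id s).const_add k).inv hks).congr_deriv (by simp [inv_pow, div_eq_mul_inv])

noncomputable def debreuField (x : ℝ × ℝ) : ℝ × ℝ :=
  if x.2 ≤ 0 then ((0:ℝ), (1:ℝ))
  else (x.2 ^ 2 / Real.sqrt (1 + x.2 ^ 4), 1 / Real.sqrt (1 + x.2 ^ 4))

theorem debreuField_apply_one_zero {x : ℝ × ℝ} (hx : x.2 ≤ 0) :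
    (debreuField x).1 * 1 + (debreuField x).2 * 0 = 0 := by
  simp [debreuField, hx]

theorem debreuField_apply_one_neg_sq {x : ℝ × ℝ} (hx : 0 < x.2) :
    (debreuField x).1 * 1 + (debreuField x).2 * -x.2 ^ 2 = 0 := by
  simp only [debreuField, if_neg hx.not_ge]
  ring

theorem half_le_debreuField_snd {x : ℝ × ℝ} (hx : x.2 ≤ 1) : 1 / 2 ≤ (debreuField x).2 := by
  unfold debreuField
  split_ifs with hx0
  · norm_num
  · rw [not_le] at hx0
    have hsqrt : Real.sqrt (1 + x.2 ^ 4) ≤ 2 :=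
      Real.sqrt_le_iff.2 ⟨by norm_num, by nlinarith [pow_le_one₀ hx0.le hx (n := 4)]⟩
    exact one_div_le_one_div_of_le (by positivity) hsqrt

def IsDebreuPotentialOn (h μ : ℝ × ℝ → ℝ) (U : Set (ℝ × ℝ)) : Prop :=
  ∀ x ∈ U, DifferentiableAt ℝ h x ∧
    ∀ v, fderiv ℝ h x v = μ x * ((debreuField x).1 * v.1 + (debreuField x).2 * v.2)

namespace IsDebreuPotentialOn

variable {h μ : ℝ × ℝ → ℝ} {U : Set (ℝ × ℝ)}

theorem mono {U' : Set (ℝ × ℝ)} (hP : IsDebreuPotentialOn h μ U) (hU : U' ⊆ U) :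
    IsDebreuPotentialOn h μ U' := fun x hx => hP x (hU hx)

theorem hasDerivAt_comp (hP : IsDebreuPotentialOn h μ U) {γ : ℝ → ℝ × ℝ} {γ' : ℝ × ℝ} {s : ℝ}
    (hγ : HasDerivAt γ γ' s) (hs : γ s ∈ U) :
    HasDerivAt (h ∘ γ)
      (μ (γ s) * ((debreuField (γ s)).1 * γ'.1 + (debreuField (γ s)).2 * γ'.2)) s := by
  rw [← (hP _ hs).2]
  exact (hP _ hs).1.hasFDerivAt.comp_hasDerivAt s hγ

theorem apply_eq_along_horizontal {a b y : ℝ} (hP : IsDebreuPotentialOn h μ (Icc a b ×ˢ {y}))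
    (hab : a ≤ b) (hy : y ≤ 0) : h (b, y) = h (a, y) :=
  eq_of_forall_hasDerivAt_zero (φ := fun s => h (s, y)) hab fun s hs => by
    have := hP.hasDerivAt_comp ((hasDerivAt_id s).prodMk (hasDerivAt_const s y)) ⟨hs, rfl⟩
    rwa [debreuField_apply_one_zero hy, mul_zero] at this

theorem apply_eq_along_hyperbola {k a b : ℝ}
    (hP : IsDebreuPotentialOn h μ ((fun s => (s, (k + s)⁻¹)) '' Icc a b))
    (hab : a ≤ b) (hka : 0 < k + a) : h (b, (k + b)⁻¹) = h (a, (k + a)⁻¹) :=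
  eq_of_forall_hasDerivAt_zero (φ := fun s => h (s, (k + s)⁻¹)) hab fun s hs => by
    have hks : 0 < k + s := by linarith [hs.1]
    have := hP.hasDerivAt_comp ((hasDerivAt_id s).prodMk (hasDerivAt_inv_const_add k s hks.ne'))
      ⟨s, hs, rfl⟩
    rwa [debreuField_apply_one_neg_sq (inv_pos.2 hks), mul_zero] at this

theorem mul_sub_le_sub_along_vertical {x₁ t E m : ℝ}
    (hP : IsDebreuPotentialOn h μ ({x₁} ×ˢ Icc t E)) (hμ : ∀ y ∈ Icc t E, m ≤ μ (x₁, y))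
    (hm : 0 ≤ m) (hE : E ≤ 1) (htE : t ≤ E) :
    m / 2 * (E - t) ≤ h (x₁, E) - h (x₁, t) := by
  have hφ : ∀ y ∈ Icc t E,
      HasDerivAt (fun y => h (x₁, y)) (μ (x₁, y) * (debreuField (x₁, y)).2) y := fun y hy =>
    (hP.hasDerivAt_comp ((hasDerivAt_const y x₁).prodMk (hasDerivAt_id y)) ⟨rfl, hy⟩).congr_deriv
      (by simp)
  refine (convex_Icc t E).mul_sub_le_image_sub_of_le_deriv
    (fun y hy => (hφ y hy).continuousAt.continuousWithinAt)
    (fun y hy => (hφ y (interior_subset hy)).differentiableAt.differentiableWithinAt)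
    (fun y hy => ?_) t (left_mem_Icc.2 htE) E (right_mem_Icc.2 htE) htE
  replace hy := interior_subset hy
  rw [(hφ y hy).deriv, div_eq_mul_one_div]
  exact mul_le_mul (hμ y hy) (half_le_debreuField_snd (hy.2.trans hE)) (by norm_num)
    (hm.trans (hμ y hy))

theorem exists_mul_sq_le_sub {m a E : ℝ}
    (hP : IsDebreuPotentialOn h μ (Icc 0 a ×ˢ Ioc 0 E)) (hμ : ∀ x ∈ Icc 0 a ×ˢ Ioc 0 E, m ≤ μ x)
    (hm : 0 ≤ m) (ha : 0 ≤ a) (hE : 0 < E) (hE1 : E ≤ 1) :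
    ∃ t ∈ Ioc 0 E, m / 2 * a * t ^ 2 ≤ h (a, t) - h (0, t) := by
  have hIoc : ∀ s, 0 ≤ s → (E⁻¹ + s)⁻¹ ∈ Ioc 0 E := fun s hs =>
    ⟨by positivity, by simpa using inv_anti₀ (inv_pos.2 hE) (le_add_of_nonneg_right hs)⟩
  -- `(a, t)` lies on the level hyperbola `1 / x₂ - x₁ = 1 / E` through `(0, E)`.
  set t := (E⁻¹ + a)⁻¹ with ht
  have ht0 := hIoc a ha
  have hcurve : (fun s => (s, (E⁻¹ + s)⁻¹)) '' Icc 0 a ⊆ Icc 0 a ×ˢ Ioc 0 E := by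
    rintro _ ⟨s, hs, rfl⟩
    exact ⟨hs, hIoc s hs.1⟩
  have hlevel : h (a, t) = h (0, E) := by
    simpa using (hP.mono hcurve).apply_eq_along_hyperbola ha (by positivity : 0 < E⁻¹ + 0)
  have hrise := (hP.mono (prod_mono (singleton_subset_iff.2 (left_mem_Icc.2 ha))
    (Icc_subset_Ioc_iff ht0.2 |>.2 ⟨ht0.1, le_rfl⟩))).mul_sub_le_sub_along_vertical
    (fun y hy => hμ _ ⟨left_mem_Icc.2 ha, ht0.1.trans_le hy.1, hy.2⟩) hm hE1 ht0.2
  have hgap : E - t = a * E * t := by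
    rw [ht]
    field_simp
    ring
  refine ⟨t, ht0, ?_⟩
  calc m / 2 * a * t ^ 2 ≤ m / 2 * (a * E * t) := by
        nlinarith [mul_le_mul_of_nonneg_left ht0.2 (mul_nonneg ha ht0.1.le)]
    _ = m / 2 * (E - t) := by rw [hgap]
    _ ≤ h (0, E) - h (0, t) := hrise
    _ = h (a, t) - h (0, t) := by rw [hlevel]

theorem not_contDiffOn_sub {m a b : ℝ}
    (hP : IsDebreuPotentialOn h μ (Icc 0 a ×ˢ Ioo (-b) b))
    (hμ : ∀ x ∈ Icc 0 a ×ˢ Ioo (-b) b, m ≤ μ x) (hm : 0 < m) (ha : 0 < a) (hb : 0 < b)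
    (hb1 : b ≤ 1) : ¬ ContDiffOn ℝ 2 (fun y => h (a, y) - h (0, y)) (ball 0 b) := by
  intro hu
  have hleft : EqOn (fun y => h (a, y) - h (0, y)) 0 (Ioc (0 - b) 0) := fun y hy =>
    sub_eq_zero.2 ((hP.mono (prod_mono le_rfl (singleton_subset_iff.2
      ⟨by linarith [hy.1], by linarith [hy.2]⟩))).apply_eq_along_horizontal ha.le hy.2)
  obtain ⟨δ, hδ, hsmall⟩ := eventually_nhds_iff_ball.1
    ((isLittleO_pow_of_eqOn_Ioc_zero hb hu hleft).bound (by positivity : 0 < m / 4 * a))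
  obtain ⟨E, hE, hEδ, hEb⟩ : ∃ E, 0 < E ∧ E < δ ∧ E < b :=
    ⟨min δ b / 2, by positivity, by linarith [min_le_left δ b], by linarith [min_le_right δ b]⟩
  have hsub : Icc 0 a ×ˢ Ioc 0 E ⊆ Icc 0 a ×ˢ Ioo (-b) b :=
    prod_mono le_rfl fun y hy => ⟨by linarith [hy.1], by linarith [hy.2]⟩
  obtain ⟨t, ht, hgap⟩ := (hP.mono hsub).exists_mul_sq_le_sub (fun x hx => hμ x (hsub hx))
    hm.le ha.le hE (hEb.le.trans hb1)
  have hbound := hsmall t (by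
    rw [Real.ball_eq_Ioo]
    exact ⟨by linarith [ht.1], by linarith [ht.2]⟩)
  rw [sub_zero, Real.norm_eq_abs, norm_pow, Real.norm_eq_abs, sq_abs] at hbound
  nlinarith [le_abs_self (h (a, t) - h (0, t)), mul_pos (mul_pos hm ha) (pow_pos ht.1 2)]

end IsDebreuPotentialOn

theorem stmt_13 :
    ¬ ∃ (V : Set (ℝ × ℝ)) (h : ℝ × ℝ → ℝ) (μ : ℝ × ℝ → ℝ),
      IsOpen V ∧ ((0:ℝ), (0:ℝ)) ∈ V ∧
      ContDiffOn ℝ 2 h V ∧ ContDiffOn ℝ 1 μ V ∧ (∀ x ∈ V, 0 < μ x) ∧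
      ∀ x ∈ V, ∀ v : ℝ × ℝ,
        fderiv ℝ h x v =
          μ x * ((if x.2 ≤ 0 then ((0:ℝ), (1:ℝ))
                  else (x.2 ^ 2 / Real.sqrt (1 + x.2 ^ 4),
                        1 / Real.sqrt (1 + x.2 ^ 4))).1 * v.1 +
                 (if x.2 ≤ 0 then ((0:ℝ), (1:ℝ))
                  else (x.2 ^ 2 / Real.sqrt (1 + x.2 ^ 4),
                        1 / Real.sqrt (1 + x.2 ^ 4))).2 * v.2) := by
  rintro ⟨V, h, μ, hV, h0V, hh, hμ, hμpos, hgrad⟩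
  have hP : IsDebreuPotentialOn h μ V := fun x hx =>
    ⟨(hh.differentiableOn (by norm_num)).differentiableAt (hV.mem_nhds hx), hgrad x hx⟩
  obtain ⟨m, hm, hmμ⟩ := exists_between (hμpos _ h0V)
  obtain ⟨r, hr, hball⟩ := eventually_nhds_iff_ball.1 ((hV.eventually_mem h0V).and
    (continuousAt_const.eventually_lt (hμ.continuousOn.continuousAt (hV.mem_nhds h0V)) hmμ))
  obtain ⟨a, b, ha, har, hb, hbr, hb1⟩ : ∃ a b : ℝ, 0 < a ∧ a < r ∧ 0 < b ∧ b < r ∧ b ≤ 1 :=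
    ⟨r / 2, min (r / 2) 1, half_pos hr, half_lt_self hr, lt_min (half_pos hr) one_pos,
      (min_le_left _ _).trans_lt (half_lt_self hr), min_le_right _ _⟩
  have hR : ∀ x ∈ Icc 0 a ×ˢ Ioo (-b) b, x ∈ V ∧ m < μ x := by
    rintro ⟨x₁, x₂⟩ ⟨hx₁, hx₂⟩
    refine hball _ ?_
    rw [← ball_prod_same, mem_prod, Real.ball_eq_Ioo, zero_sub, zero_add]
    exact ⟨⟨by linarith [hx₁.1], by linarith [hx₁.2]⟩, ⟨by linarith [hx₂.1], by linarith [hx₂.2]⟩⟩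
  have hslice : ∀ x₁ ∈ Icc 0 a, ContDiffOn ℝ 2 (fun y => h (x₁, y)) (ball 0 b) := fun x₁ hx₁ =>
    hh.comp (contDiff_const.prodMk contDiff_id).contDiffOn fun y hy =>
      (hR _ ⟨hx₁, by simpa [Real.ball_eq_Ioo] using hy⟩).1
  exact (hP.mono fun x hx => (hR x hx).1).not_contDiffOn_sub (fun x hx => (hR x hx).2.le) hm ha hb
    hb1 ((hslice a (right_mem_Icc.2 ha.le)).sub (hslice 0 (left_mem_Icc.2 ha.le)))
end
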